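/- arXiv:2204.03172 — 10 statements merged into one kernel-verified Lean document; each statement's English description precedes it below -/
import Mathlib

section
/- Let A be a 3-Lie algebra over a field k and let R : A → A be a Rota-Baxter operator of weight λ. Then the descendent bracket [x,y,z]_R := [R(x),R(y),z] + [R(x),y,R(z)] + [x,R(y),R(z)] + λ([R(x),y,z] + [x,R(y),z] + [x,y,R(z)]) + λ²[x,y,z] is again a 3-Lie algebra structure on A (i.e. it is trilinear, totally skew-symmetric and satisfies the fundamental identity), and R is a Rota-Baxter operator of weight λ for the bracket [·,·,·]_R. -/
/-- The descendent trilinear expression associated to a bracket `br`, a weight `lam`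
and an operator `R`. -/
def descBr {k : Type*} [Field k] {A : Type*} [AddCommGroup A] [Module k A]
    (br : A →ₗ[k] A →ₗ[k] A →ₗ[k] A) (lam : k) (R : Module.End k A)
    (x y z : A) : A :=
  br (R x) (R y) z + br (R x) y (R z) + br x (R y) (R z)
    + lam • (br (R x) y z + br x (R y) z + br x y (R z)) + lam ^ 2 • br x y z

/-- `br` is a (trilinear) 3-Lie bracket: totally skew-symmetric and satisfying
the fundamental identity. -/
def IsThreeLieBracket {k : Type*} [Field k] {A : Type*} [AddCommGroup A] [Module k A]
    (br : A →ₗ[k] A →ₗ[k] A →ₗ[k] A) : Prop :=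
  (∀ x y z : A, br x y z = - br y x z) ∧
  (∀ x y z : A, br x y z = - br x z y) ∧
  (∀ x1 x2 y1 y2 y3 : A, br x1 x2 (br y1 y2 y3)
      = br (br x1 x2 y1) y2 y3 + br y1 (br x1 x2 y2) y3 + br y1 y2 (br x1 x2 y3))

/-- `R` is a Rota-Baxter operator of weight `lam` on the 3-Lie algebra `(A, br)`. -/
def IsRotaBaxter {k : Type*} [Field k] {A : Type*} [AddCommGroup A] [Module k A]
    (br : A →ₗ[k] A →ₗ[k] A →ₗ[k] A) (lam : k) (R : Module.End k A) : Prop :=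
  ∀ x y z : A, br (R x) (R y) (R z) = R (descBr br lam R x y z)

/-- The descendent bracket, packaged as a trilinear map. -/
def descBrL {k : Type*} [Field k] {A : Type*} [AddCommGroup A] [Module k A]
    (br : A →ₗ[k] A →ₗ[k] A →ₗ[k] A) (lam : k) (R : Module.End k A) :
    A →ₗ[k] A →ₗ[k] A →ₗ[k] A where
  toFun x :=
    { toFun := fun y =>
        { toFun := fun z => descBr br lam R x y z
          map_add' := by
            intro a b
            simp only [descBr, map_add, LinearMap.add_apply]
            module
          map_smul' := by
            intro c a
            simp only [descBr, map_smul, LinearMap.smul_apply, RingHom.id_apply]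
            module }
      map_add' := by
        intro a b
        ext z
        simp only [descBr, map_add, LinearMap.add_apply, LinearMap.coe_mk, AddHom.coe_mk]
        module
      map_smul' := by
        intro c a
        ext z
        simp only [descBr, map_smul, LinearMap.smul_apply, LinearMap.coe_mk, AddHom.coe_mk,
          RingHom.id_apply]
        module }
  map_add' := by
    intro a b
    ext y z
    simp only [descBr, map_add, LinearMap.add_apply, LinearMap.coe_mk, AddHom.coe_mk]
    module
  map_smul' := by
    intro c a
    ext y z
    simp only [descBr, map_smul, LinearMap.smul_apply, LinearMap.coe_mk, AddHom.coe_mk,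
      RingHom.id_apply]
    module

set_option maxHeartbeats 4000000

/-- the descendent bracket `[·,·,·]_R` is again a 3-Lie algebra structure
on `A` (trilinear, totally skew-symmetric, fundamental identity) and `R` is a
Rota-Baxter operator of weight `lam` for it. -/
theorem descendent_bracket_is_RotaBaxter_threeLie
    {k : Type*} [Field k] {A : Type*} [AddCommGroup A] [Module k A]
    (br : A →ₗ[k] A →ₗ[k] A →ₗ[k] A) (lam : k) (R : Module.End k A)
    (hbr : IsThreeLieBracket br) (hR : IsRotaBaxter br lam R) :
    ∃ brR : A →ₗ[k] A →ₗ[k] A →ₗ[k] A,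
      (∀ x y z : A, brR x y z = descBr br lam R x y z) ∧
      IsThreeLieBracket brR ∧ IsRotaBaxter brR lam R := by
  obtain ⟨h1, h2, h3⟩ := hbr
  have key : ∀ a b c : A, R (descBr br lam R a b c) = br (R a) (R b) (R c) :=
    fun a b c => (hR a b c).symm
  refine ⟨descBrL br lam R, fun x y z => rfl, ⟨?_, ?_, ?_⟩, ?_⟩
  · -- skew-symmetry in the first two arguments
    intro x y z
    show descBr br lam R x y z = - descBr br lam R y x z
    simp only [descBr]
    rw [h1 (R x) (R y) z, h1 (R x) y (R z), h1 x (R y) (R z), h1 (R x) y z,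
      h1 x (R y) z, h1 x y (R z), h1 x y z]
    module
  · -- skew-symmetry in the last two arguments
    intro x y z
    show descBr br lam R x y z = - descBr br lam R x z y
    simp only [descBr]
    rw [h2 (R x) (R y) z, h2 (R x) y (R z), h2 x (R y) (R z), h2 (R x) y z,
      h2 x (R y) z, h2 x y (R z), h2 x y z]
    module
  · -- fundamental identity
    intro x1 x2 y1 y2 y3
    show descBr br lam R x1 x2 (descBr br lam R y1 y2 y3)
        = descBr br lam R (descBr br lam R x1 x2 y1) y2 y3
          + descBr br lam R y1 (descBr br lam R x1 x2 y2) y3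
          + descBr br lam R y1 y2 (descBr br lam R x1 x2 y3)
    simp only [descBr] at key ⊢
    rw [key x1 x2 y1, key x1 x2 y2, key x1 x2 y3, key y1 y2 y3]
    simp only [map_add, map_smul, LinearMap.add_apply, LinearMap.smul_apply]
    simp only [h3 (R x1) (R x2) (R y1) (R y2) y3,
        h3 (R x1) (R x2) (R y1) y2 (R y3),
        h3 (R x1) (R x2) y1 (R y2) (R y3),
        h3 (R x1) (R x2) (R y1) y2 y3,
        h3 (R x1) (R x2) y1 (R y2) y3,
        h3 (R x1) (R x2) y1 y2 (R y3),
        h3 (R x1) (R x2) y1 y2 y3,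
        h3 (R x1) x2 (R y1) (R y2) (R y3),
        h3 x1 (R x2) (R y1) (R y2) (R y3),
        h3 (R x1) x2 (R y1) (R y2) y3,
        h3 (R x1) x2 (R y1) y2 (R y3),
        h3 (R x1) x2 y1 (R y2) (R y3),
        h3 (R x1) x2 (R y1) y2 y3,
        h3 (R x1) x2 y1 (R y2) y3,
        h3 (R x1) x2 y1 y2 (R y3),
        h3 (R x1) x2 y1 y2 y3,
        h3 x1 (R x2) (R y1) (R y2) y3,
        h3 x1 (R x2) (R y1) y2 (R y3),
        h3 x1 (R x2) y1 (R y2) (R y3),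
        h3 x1 (R x2) (R y1) y2 y3,
        h3 x1 (R x2) y1 (R y2) y3,
        h3 x1 (R x2) y1 y2 (R y3),
        h3 x1 (R x2) y1 y2 y3,
        h3 x1 x2 (R y1) (R y2) (R y3),
        h3 x1 x2 (R y1) (R y2) y3,
        h3 x1 x2 (R y1) y2 (R y3),
        h3 x1 x2 y1 (R y2) (R y3),
        h3 x1 x2 (R y1) y2 y3,
        h3 x1 x2 y1 (R y2) y3,
        h3 x1 x2 y1 y2 (R y3),
        h3 x1 x2 y1 y2 y3]
    module
  · -- R is Rota-Baxter for the descendent bracket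
    intro x y z
    have expand : descBr (descBrL br lam R) lam R x y z
        = descBr br lam R (R x) (R y) z + descBr br lam R (R x) y (R z)
          + descBr br lam R x (R y) (R z)
          + lam • (descBr br lam R (R x) y z + descBr br lam R x (R y) z
              + descBr br lam R x y (R z))
          + lam ^ 2 • descBr br lam R x y z := rfl
    show descBr br lam R (R x) (R y) (R z) = R (descBr (descBrL br lam R) lam R x y z)
    rw [expand]
    simp only [map_add, map_smul]
    rw [key (R x) (R y) z, key (R x) y (R z), key x (R y) (R z), key (R x) y z,
      key x (R y) z, key x y (R z), key x y z]
    simp only [descBr]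
end

section
/- Let (V,ρ,R_V) be a representation of a Rota-Baxter 3-Lie algebra (A,R) of weight λ. Define ρ* : A×A → gl(V*) by ⟨ρ*(x,y)ξ, w⟩ = −⟨ξ, ρ(x,y)w⟩ for ξ ∈ V*, w ∈ V, and let I denote the identity map of V*. Then (V*, ρ*, −λI − R_V*) is a representation of the Rota-Baxter 3-Lie algebra (A,R), where R_V* denotes the dual (transpose) map of R_V. -/
/-- `(V, ρ)` is a representation of the 3-Lie algebra `(A, br)`. -/
def IsRep {k : Type*} [Field k] {A V : Type*} [AddCommGroup A] [Module k A]
    [AddCommGroup V] [Module k V]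
    (br : A →ₗ[k] A →ₗ[k] A →ₗ[k] A)
    (ρ : A →ₗ[k] A →ₗ[k] Module.End k V) : Prop :=
  (∀ x y : A, ρ x y = - ρ y x) ∧
  (∀ x1 x2 x3 x4 : A,
      ρ x1 x2 * ρ x3 x4 - ρ x3 x4 * ρ x1 x2
        = ρ (br x1 x2 x3) x4 - ρ (br x1 x2 x4) x3) ∧
  (∀ x1 x2 x3 x4 : A,
      ρ (br x1 x2 x3) x4
        = ρ x1 x2 * ρ x3 x4 + ρ x2 x3 * ρ x1 x4 + ρ x3 x1 * ρ x2 x4)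

/-- The Rota-Baxter compatibility (2.3) between `ρ`, `R` and `Rv`. -/
def RBRepCompat {k : Type*} [Field k] {A V : Type*} [AddCommGroup A] [Module k A]
    [AddCommGroup V] [Module k V]
    (lam : k) (R : Module.End k A)
    (ρ : A →ₗ[k] A →ₗ[k] Module.End k V) (Rv : Module.End k V) : Prop :=
  ∀ x1 x2 : A,
    ρ (R x1) (R x2) * Rv
      = Rv * ρ (R x1) (R x2)
        + Rv * (ρ (R x1) x2 + ρ x1 (R x2) + lam • ρ x1 x2) * Rv
        + lam • (Rv * (ρ (R x1) x2 + ρ x1 (R x2) + lam • ρ x1 x2))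

/-- `(V, ρ, Rv)` is a representation of the Rota-Baxter 3-Lie algebra `(A, br, R)`
of weight `lam`. -/
def IsRBRep {k : Type*} [Field k] {A V : Type*} [AddCommGroup A] [Module k A]
    [AddCommGroup V] [Module k V]
    (br : A →ₗ[k] A →ₗ[k] A →ₗ[k] A) (lam : k) (R : Module.End k A)
    (ρ : A →ₗ[k] A →ₗ[k] Module.End k V) (Rv : Module.End k V) : Prop :=
  IsRep br ρ ∧ RBRepCompat lam R ρ Rv

/-- auxiliary: symmetric-sum identity for representations of 3-Lie algebras. -/
theorem rep_sym_sum_zero {k : Type*} [Field k] {A V : Type*} [AddCommGroup A] [Module k A]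
    [AddCommGroup V] [Module k V]
    {br : A →ₗ[k] A →ₗ[k] A →ₗ[k] A} {ρ : A →ₗ[k] A →ₗ[k] Module.End k V}
    (h : IsRep br ρ) (x1 x2 x3 x4 : A) :
    ρ x1 x2 * ρ x3 x4 + ρ x3 x4 * ρ x1 x2 + ρ x2 x3 * ρ x1 x4 + ρ x1 x4 * ρ x2 x3
      + ρ x3 x1 * ρ x2 x4 + ρ x2 x4 * ρ x3 x1 = 0 := by
  obtain ⟨hsk, h2, h3⟩ := h
  have e1 := h3 x1 x2 x3 x4
  have e2 := h3 x1 x2 x4 x3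
  rw [hsk x4 x3, hsk x1 x3, hsk x4 x1] at e2
  have c1 := h2 x1 x2 x3 x4
  linear_combination (norm := noncomm_ring) e2 - e1 - c1

/-- auxiliary: the dual bilinear map ρ*. -/
noncomputable def dualRep {k : Type*} [Field k] {A V : Type*} [AddCommGroup A] [Module k A]
    [AddCommGroup V] [Module k V]
    (ρ : A →ₗ[k] A →ₗ[k] Module.End k V) :
    A →ₗ[k] A →ₗ[k] Module.End k (Module.Dual k V) :=
  LinearMap.mk₂ k (fun x y => -(ρ x y).dualMap)
    (by intro x x' y; ext ξ w; simp; ring)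
    (by intro c x y; ext ξ w; simp)
    (by intro x y y'; ext ξ w; simp; ring)
    (by intro c x y; ext ξ w; simp)

theorem dualRep_apply {k : Type*} [Field k] {A V : Type*} [AddCommGroup A] [Module k A]
    [AddCommGroup V] [Module k V]
    (ρ : A →ₗ[k] A →ₗ[k] Module.End k V) (x y : A) (ξ : Module.Dual k V) (w : V) :
    dualRep ρ x y ξ w = - ξ (ρ x y w) := by
  simp [dualRep]

/-- the dual representation `(V*, ρ*, -λI - Rv*)` of a representation
`(V, ρ, Rv)` of a Rota-Baxter 3-Lie algebra `(A, R)` of weight `lam`. -/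
theorem dual_representation
    {k : Type*} [Field k] {A V : Type*} [AddCommGroup A] [Module k A]
    [AddCommGroup V] [Module k V]
    (br : A →ₗ[k] A →ₗ[k] A →ₗ[k] A) (lam : k) (R : Module.End k A)
    (hbr : IsThreeLieBracket br) (hR : IsRotaBaxter br lam R)
    (ρ : A →ₗ[k] A →ₗ[k] Module.End k V) (Rv : Module.End k V)
    (hrep : IsRBRep br lam R ρ Rv) :
    ∃ ρs : A →ₗ[k] A →ₗ[k] Module.End k (Module.Dual k V),
      (∀ (x y : A) (ξ : Module.Dual k V) (w : V), ρs x y ξ w = - ξ (ρ x y w)) ∧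
      IsRBRep br lam R ρs
        (-(lam • (1 : Module.End k (Module.Dual k V))) - Rv.dualMap) := by
  obtain ⟨hVrep, hcomp⟩ := hrep
  have key := rep_sym_sum_zero hVrep
  obtain ⟨hsk, h2, h3⟩ := hVrep
  refine ⟨dualRep ρ, dualRep_apply ρ, ⟨?_, ?_, ?_⟩, ?_⟩
  · -- skew-symmetry
    intro x y
    ext ξ w
    have h := hsk x y
    simp [dualRep_apply, h]
  · -- identity (2)
    intro x1 x2 x3 x4
    ext ξ w
    have h := congrArg ξ (LinearMap.congr_fun (h2 x1 x2 x3 x4) w)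
    simp only [Module.End.mul_apply, LinearMap.sub_apply, map_sub] at h ⊢
    simp only [dualRep_apply, LinearMap.neg_apply, map_neg]
    linear_combination -h
  · -- identity (3)
    intro x1 x2 x3 x4
    ext ξ w
    have hk := congrArg ξ (LinearMap.congr_fun (key x1 x2 x3 x4) w)
    have he := congrArg ξ (LinearMap.congr_fun (h3 x1 x2 x3 x4) w)
    simp only [Module.End.mul_apply, LinearMap.add_apply, LinearMap.zero_apply, map_add,
      map_zero] at hk he ⊢
    simp only [dualRep_apply, map_neg]
    linear_combination -hk - he
  · -- RB compatibility
    intro x1 x2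
    ext ξ w
    have h := congrArg ξ (LinearMap.congr_fun (hcomp x1 x2) w)
    simp only [Module.End.mul_apply, LinearMap.add_apply, LinearMap.smul_apply, LinearMap.sub_apply,
      LinearMap.neg_apply, Module.End.one_apply, map_add, map_smul, map_neg, map_sub,
      smul_eq_mul, LinearMap.dualMap_apply] at h ⊢
    simp only [dualRep_apply, LinearMap.dualMap_apply, map_add, map_smul, map_neg,
      smul_eq_mul] at *
    linear_combination -h
end

section
/- Let (A,R) be a Rota-Baxter 3-Lie algebra of weight λ and (V,ρ,R_V) a representation of it. Define ρ̃ : A×A → gl(V) by ρ̃(x1,x2) = ρ(R(x1),R(x2)) − R_V∘(ρ(R(x1),x2) + ρ(x1,R(x2)) + λρ(x1,x2)). Then (V, ρ̃, R_V) is a representation of the Rota-Baxter 3-Lie algebra (A_R, R), where A_R denotes A equipped with the descendent bracket [·,·,·]_R. -/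
section Aux

variable {k : Type*} [Field k] {A V : Type*} [AddCommGroup A] [Module k A]
    [AddCommGroup V] [Module k V]
    (br : A →ₗ[k] A →ₗ[k] A →ₗ[k] A) (lam : k) (R : Module.End k A)
    (ρ : A →ₗ[k] A →ₗ[k] Module.End k V) (Rv : Module.End k V)

set_option maxHeartbeats 2000000 in
/-- The key purely-representation-theoretic expansion identity. -/
private lemma star_id
    (h3 : ∀ x1 x2 x3 x4 : A, ρ (br x1 x2 x3) x4
        = ρ x1 x2 * ρ x3 x4 + ρ x2 x3 * ρ x1 x4 + ρ x3 x1 * ρ x2 x4)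
    (a b c d : A) :
    ρ (br (R a) (R b) (R c)) d + ρ (descBr br lam R a b c) (R d)
      + lam • ρ (descBr br lam R a b c) d
    = ρ (R a) (R b) * (ρ (R c) d + ρ c (R d) + lam • ρ c d)
      + (ρ (R a) b + ρ a (R b) + lam • ρ a b) * ρ (R c) (R d)
      + lam • ((ρ (R a) b + ρ a (R b) + lam • ρ a b) * (ρ (R c) d + ρ c (R d) + lam • ρ c d))
      + ρ (R b) (R c) * (ρ (R a) d + ρ a (R d) + lam • ρ a d)
      + (ρ (R b) c + ρ b (R c) + lam • ρ b c) * ρ (R a) (R d)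
      + lam • ((ρ (R b) c + ρ b (R c) + lam • ρ b c) * (ρ (R a) d + ρ a (R d) + lam • ρ a d))
      + ρ (R c) (R a) * (ρ (R b) d + ρ b (R d) + lam • ρ b d)
      + (ρ (R c) a + ρ c (R a) + lam • ρ c a) * ρ (R b) (R d)
      + lam • ((ρ (R c) a + ρ c (R a) + lam • ρ c a) * (ρ (R b) d + ρ b (R d) + lam • ρ b d)) := by
  simp only [descBr, map_add, map_smul, LinearMap.add_apply, LinearMap.smul_apply, h3,
    mul_add, add_mul, mul_smul_comm, smul_mul_assoc, smul_add, smul_smul]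
  module

/-- Canonically oriented "anticommutator" identity. -/
private lemma acc_id
    (hsk : ∀ x y : A, ρ x y = - ρ y x)
    (h2 : ∀ x1 x2 x3 x4 : A, ρ x1 x2 * ρ x3 x4 - ρ x3 x4 * ρ x1 x2
        = ρ (br x1 x2 x3) x4 - ρ (br x1 x2 x4) x3)
    (h3 : ∀ x1 x2 x3 x4 : A, ρ (br x1 x2 x3) x4
        = ρ x1 x2 * ρ x3 x4 + ρ x2 x3 * ρ x1 x4 + ρ x3 x1 * ρ x2 x4)
    (a b c d : A) :
    ρ a b * ρ c d + ρ c d * ρ a b + ρ b c * ρ a d + ρ a d * ρ b c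
      = ρ a c * ρ b d + ρ b d * ρ a c := by
  have e := h2 a b c d
  rw [h3 a b c d, h3 a b d c] at e
  rw [hsk c a, hsk d c, hsk d a] at e
  simp only [neg_mul, mul_neg, neg_neg] at e
  linear_combination (norm := module) -e

set_option maxHeartbeats 2000000 in
/-- The "S"-identity comparing the two cyclic sums. -/
private lemma slem_id
    (hsk : ∀ x y : A, ρ x y = - ρ y x)
    (h2 : ∀ x1 x2 x3 x4 : A, ρ x1 x2 * ρ x3 x4 - ρ x3 x4 * ρ x1 x2
        = ρ (br x1 x2 x3) x4 - ρ (br x1 x2 x4) x3)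
    (h3 : ∀ x1 x2 x3 x4 : A, ρ (br x1 x2 x3) x4
        = ρ x1 x2 * ρ x3 x4 + ρ x2 x3 * ρ x1 x4 + ρ x3 x1 * ρ x2 x4)
    (a b c d : A) :
    ρ (R a) (R b) * (ρ (R c) d + ρ c (R d) + lam • ρ c d)
      + (ρ (R a) b + ρ a (R b) + lam • ρ a b) * ρ (R c) (R d)
      + lam • ((ρ (R a) b + ρ a (R b) + lam • ρ a b) * (ρ (R c) d + ρ c (R d) + lam • ρ c d))
      + ρ (R b) (R c) * (ρ (R a) d + ρ a (R d) + lam • ρ a d)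
      + (ρ (R b) c + ρ b (R c) + lam • ρ b c) * ρ (R a) (R d)
      + lam • ((ρ (R b) c + ρ b (R c) + lam • ρ b c) * (ρ (R a) d + ρ a (R d) + lam • ρ a d))
      + ρ (R c) (R a) * (ρ (R b) d + ρ b (R d) + lam • ρ b d)
      + (ρ (R c) a + ρ c (R a) + lam • ρ c a) * ρ (R b) (R d)
      + lam • ((ρ (R c) a + ρ c (R a) + lam • ρ c a) * (ρ (R b) d + ρ b (R d) + lam • ρ b d))
    = (ρ (R a) (R b) * (ρ (R d) c + ρ d (R c) + lam • ρ d c)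
      + (ρ (R a) b + ρ a (R b) + lam • ρ a b) * ρ (R d) (R c)
      + lam • ((ρ (R a) b + ρ a (R b) + lam • ρ a b) * (ρ (R d) c + ρ d (R c) + lam • ρ d c))
      + ρ (R b) (R d) * (ρ (R a) c + ρ a (R c) + lam • ρ a c)
      + (ρ (R b) d + ρ b (R d) + lam • ρ b d) * ρ (R a) (R c)
      + lam • ((ρ (R b) d + ρ b (R d) + lam • ρ b d) * (ρ (R a) c + ρ a (R c) + lam • ρ a c))
      + ρ (R d) (R a) * (ρ (R b) c + ρ b (R c) + lam • ρ b c)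
      + (ρ (R d) a + ρ d (R a) + lam • ρ d a) * ρ (R b) (R c)
      + lam • ((ρ (R d) a + ρ d (R a) + lam • ρ d a) * (ρ (R b) c + ρ b (R c) + lam • ρ b c)))
      + (ρ (R a) (R b) * (ρ (R c) d + ρ c (R d) + lam • ρ c d) - (ρ (R c) d + ρ c (R d) + lam • ρ c d) * ρ (R a) (R b)
      + (ρ (R a) b + ρ a (R b) + lam • ρ a b) * ρ (R c) (R d) - ρ (R c) (R d) * (ρ (R a) b + ρ a (R b) + lam • ρ a b)
      + lam • ((ρ (R a) b + ρ a (R b) + lam • ρ a b) * (ρ (R c) d + ρ c (R d) + lam • ρ c d)) - lam • ((ρ (R c) d + ρ c (R d) + lam • ρ c d) * (ρ (R a) b + ρ a (R b) + lam • ρ a b))) := by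
  have acc := acc_id br ρ hsk h2 h3
  simp only [hsk c a, hsk (R c) a, hsk c (R a), hsk (R c) (R a),
    hsk d a, hsk (R d) a, hsk d (R a), hsk (R d) (R a),
    hsk d c, hsk (R d) c, hsk d (R c), hsk (R d) (R c)]
  simp only [mul_add, add_mul, mul_sub, sub_mul, mul_assoc, mul_smul_comm, smul_mul_assoc, smul_add, smul_sub, smul_smul, mul_neg, neg_mul, neg_neg, smul_neg, neg_add]
  linear_combination (norm := module)
      lam ^ 3 • (acc a b c d)
      + lam ^ 2 • (acc a b c (R d))
      + lam ^ 2 • (acc a b (R c) d)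
      + lam • (acc a b (R c) (R d))
      + lam ^ 2 • (acc a (R b) c d)
      + lam • (acc a (R b) c (R d))
      + lam • (acc a (R b) (R c) d)
      + (acc a (R b) (R c) (R d))
      + lam ^ 2 • (acc (R a) b c d)
      + lam • (acc (R a) b c (R d))
      + lam • (acc (R a) b (R c) d)
      + (acc (R a) b (R c) (R d))
      + lam • (acc (R a) (R b) c d)
      + (acc (R a) (R b) c (R d))
      + (acc (R a) (R b) (R c) d)

end Aux

set_option maxHeartbeats 4000000 in
/-- `(V, ρ̃, Rv)` with
`ρ̃(x1,x2) = ρ(R x1, R x2) - Rv ∘ (ρ(R x1, x2) + ρ(x1, R x2) + λ ρ(x1,x2))`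
is a representation of the Rota-Baxter 3-Lie algebra `(A_R, R)`. -/
theorem induced_representation_tilde
    {k : Type*} [Field k] {A V : Type*} [AddCommGroup A] [Module k A]
    [AddCommGroup V] [Module k V]
    (br : A →ₗ[k] A →ₗ[k] A →ₗ[k] A) (lam : k) (R : Module.End k A)
    (hbr : IsThreeLieBracket br) (hR : IsRotaBaxter br lam R)
    (ρ : A →ₗ[k] A →ₗ[k] Module.End k V) (Rv : Module.End k V)
    (hrep : IsRBRep br lam R ρ Rv)
    (brR : A →ₗ[k] A →ₗ[k] A →ₗ[k] A)
    (hbrR : ∀ x y z : A, brR x y z = descBr br lam R x y z) :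
    ∃ ρt : A →ₗ[k] A →ₗ[k] Module.End k V,
      (∀ x1 x2 : A,
          ρt x1 x2 = ρ (R x1) (R x2)
            - Rv * (ρ (R x1) x2 + ρ x1 (R x2) + lam • ρ x1 x2)) ∧
      IsRBRep brR lam R ρt Rv := by
  obtain ⟨⟨hsk, h2, h3⟩, hcomp⟩ := hrep
  -- construct the bilinear map ρt
  refine ⟨LinearMap.mk₂ k
      (fun x y => ρ (R x) (R y) - Rv * (ρ (R x) y + ρ x (R y) + lam • ρ x y))
      (fun m n p => by
        simp only [map_add, LinearMap.add_apply, mul_add, add_mul, mul_smul_comm, smul_add]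
        module)
      (fun t m n => by
        simp only [map_smul, LinearMap.smul_apply, mul_smul_comm, smul_mul_assoc, smul_add, smul_smul, mul_add]
        module)
      (fun m n p => by
        simp only [map_add, LinearMap.add_apply, mul_add, add_mul, mul_smul_comm, smul_add]
        module)
      (fun t m n => by
        simp only [map_smul, LinearMap.smul_apply, mul_smul_comm, smul_mul_assoc, smul_add, smul_smul, mul_add]
        module), fun x1 x2 => rfl, ?_, ?_⟩
  · refine ⟨fun x y => ?_, fun x1 x2 x3 x4 => ?_, fun x1 x2 x3 x4 => ?_⟩
    · -- skew-symmetry of ρt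
      simp only [LinearMap.mk₂_apply]
      have hv1 := congrArg (Rv * ·) (hsk (R x) y)
      have hv2 := congrArg (Rv * ·) (hsk x (R y))
      have hv3 := congrArg (Rv * ·) (hsk x y)
      simp only [mul_add, add_mul, mul_sub, sub_mul, mul_assoc, mul_smul_comm, smul_mul_assoc, smul_add, smul_sub, smul_smul, mul_neg, neg_mul, neg_neg] at hv1 hv2 hv3 ⊢
      linear_combination (norm := module) hsk (R x) (R y) - hv1 - hv2 - lam • hv3
    · -- second representation axiom for ρt
      simp only [LinearMap.mk₂_apply, hbrR]
      rw [← hR x1 x2 x3, ← hR x1 x2 x4]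
      have h2i := h2 (R x1) (R x2) (R x3) (R x4)
      have hA := congrArg (fun t => t * (ρ (R x3) x4 + ρ x3 (R x4) + lam • ρ x3 x4)) (hcomp x1 x2)
      have hB := congrArg (fun t => t * (ρ (R x1) x2 + ρ x1 (R x2) + lam • ρ x1 x2)) (hcomp x3 x4)
      have hS1 := congrArg (Rv * ·) (star_id br lam R ρ h3 x1 x2 x3 x4)
      have hS2 := congrArg (Rv * ·) (star_id br lam R ρ h3 x1 x2 x4 x3)
      have hC := congrArg (Rv * ·) (slem_id br lam R ρ hsk h2 h3 x1 x2 x3 x4)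
      simp only [mul_add, add_mul, mul_sub, sub_mul, mul_assoc, mul_smul_comm, smul_mul_assoc, smul_add, smul_sub, smul_smul, mul_neg, neg_mul, neg_neg] at h2i hA hB hS1 hS2 hC ⊢
      linear_combination (norm := module) h2i - hA + hB + hS1 - hS2 + hC
    · -- third representation axiom for ρt
      simp only [LinearMap.mk₂_apply, hbrR]
      rw [← hR x1 x2 x3]
      have h3i := h3 (R x1) (R x2) (R x3) (R x4)
      have hE1 := congrArg (fun t => t * (ρ (R x3) x4 + ρ x3 (R x4) + lam • ρ x3 x4)) (hcomp x1 x2)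
      have hE2 := congrArg (fun t => t * (ρ (R x1) x4 + ρ x1 (R x4) + lam • ρ x1 x4)) (hcomp x2 x3)
      have hE3 := congrArg (fun t => t * (ρ (R x2) x4 + ρ x2 (R x4) + lam • ρ x2 x4)) (hcomp x3 x1)
      have hst := congrArg (Rv * ·) (star_id br lam R ρ h3 x1 x2 x3 x4)
      simp only [mul_add, add_mul, mul_sub, sub_mul, mul_assoc, mul_smul_comm, smul_mul_assoc, smul_add, smul_sub, smul_smul, mul_neg, neg_mul, neg_neg] at h3i hE1 hE2 hE3 hst ⊢
      linear_combination (norm := module) h3i + hE1 + hE2 + hE3 - hst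
  · -- Rota-Baxter compatibility for ρt
    intro x1 x2
    simp only [LinearMap.mk₂_apply]
    have F4 := hcomp (R x1) (R x2)
    have G1 := congrArg (Rv * ·) (hcomp x1 x2)
    have G2 := congrArg (Rv * ·) (hcomp (R x1) x2)
    have G3 := congrArg (Rv * ·) (hcomp x1 (R x2))
    simp only [mul_add, add_mul, mul_sub, sub_mul, mul_assoc, mul_smul_comm, smul_mul_assoc, smul_add, smul_sub, smul_smul, mul_neg, neg_mul, neg_neg] at F4 G1 G2 G3 ⊢
    linear_combination (norm := module) F4 - G2 - G3 - lam • G1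
end

section
/- Let (A,R) be a Rota-Baxter 3-Lie algebra of weight λ and (V,ρ,R_V) a representation of it. Define ρ̄ : A×A → gl(V) by ρ̄(x1,x2) = ρ(R(x1),R(x2)) + (ρ(R(x1),x2) + ρ(x1,R(x2)) + λρ(x1,x2))∘R_V + λ(ρ(R(x1),x2) + ρ(x1,R(x2)) + λρ(x1,x2)). Then (V, ρ̄, R_V) is a representation of the Rota-Baxter 3-Lie algebra (A_R, R), where A_R denotes A equipped with the descendent bracket [·,·,·]_R. -/
section Aux

variable {k : Type*} [Field k] {A V : Type*} [AddCommGroup A] [Module k A]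
    [AddCommGroup V] [Module k V]

/-- auxiliary: the "S-part" of the induced representation. -/
def auxQ (ρ : A →ₗ[k] A →ₗ[k] Module.End k V) (lam : k) (R : Module.End k A)
    (a b : A) : Module.End k V :=
  ρ (R a) b + ρ a (R b) + lam • ρ a b

/-- auxiliary: the value of the induced representation. -/
def auxRb (ρ : A →ₗ[k] A →ₗ[k] Module.End k V) (lam : k) (R : Module.End k A)
    (Rv : Module.End k V) (a b : A) : Module.End k V :=
  ρ (R a) (R b) + auxQ ρ lam R a b * Rv + lam • auxQ ρ lam R a b

/-- auxiliary: "mixed part" of a product of two induced-representation values. -/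
def auxM (ρ : A →ₗ[k] A →ₗ[k] Module.End k V) (lam : k) (R : Module.End k A)
    (a b c d : A) : Module.End k V :=
  ρ (R a) (R b) * auxQ ρ lam R c d + auxQ ρ lam R a b * ρ (R c) (R d)
    + lam • (auxQ ρ lam R a b * auxQ ρ lam R c d)

/-- The packaged bilinear induced representation. -/
noncomputable def rhoBar (ρ : A →ₗ[k] A →ₗ[k] Module.End k V) (lam : k) (R : Module.End k A)
    (Rv : Module.End k V) : A →ₗ[k] A →ₗ[k] Module.End k V :=
  ρ.compl₁₂ R R + (ρ.compl₁₂ R LinearMap.id + ρ.compl₁₂ LinearMap.id R + lam • ρ).compr₂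
      (LinearMap.mulRight k Rv + lam • LinearMap.id)

lemma rhoBar_apply (ρ : A →ₗ[k] A →ₗ[k] Module.End k V) (lam : k) (R : Module.End k A)
    (Rv : Module.End k V) (a b : A) :
    rhoBar ρ lam R Rv a b = auxRb ρ lam R Rv a b := by
  simp only [rhoBar, auxRb, auxQ, LinearMap.compl₁₂_apply, LinearMap.compr₂_apply,
    LinearMap.add_apply, LinearMap.smul_apply, LinearMap.mulRight_apply, LinearMap.id_apply,
    LinearMap.id_coe, id_eq]
  module

end Aux

set_option maxHeartbeats 3200000 in
/-- `(V, ρ̄, Rv)` with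
`ρ̄(x1,x2) = ρ(R x1, R x2) + (ρ(R x1, x2) + ρ(x1, R x2) + λ ρ(x1,x2)) ∘ Rv
  + λ (ρ(R x1, x2) + ρ(x1, R x2) + λ ρ(x1,x2))`
is a representation of the Rota-Baxter 3-Lie algebra `(A_R, R)`. -/
theorem induced_representation_bar
    {k : Type*} [Field k] {A V : Type*} [AddCommGroup A] [Module k A]
    [AddCommGroup V] [Module k V]
    (br : A →ₗ[k] A →ₗ[k] A →ₗ[k] A) (lam : k) (R : Module.End k A)
    (hbr : IsThreeLieBracket br) (hR : IsRotaBaxter br lam R)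
    (ρ : A →ₗ[k] A →ₗ[k] Module.End k V) (Rv : Module.End k V)
    (hrep : IsRBRep br lam R ρ Rv)
    (brR : A →ₗ[k] A →ₗ[k] A →ₗ[k] A)
    (hbrR : ∀ x y z : A, brR x y z = descBr br lam R x y z) :
    ∃ ρb : A →ₗ[k] A →ₗ[k] Module.End k V,
      (∀ x1 x2 : A,
          ρb x1 x2 = ρ (R x1) (R x2)
            + (ρ (R x1) x2 + ρ x1 (R x2) + lam • ρ x1 x2) * Rv
            + lam • (ρ (R x1) x2 + ρ x1 (R x2) + lam • ρ x1 x2)) ∧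
      IsRBRep brR lam R ρb Rv := by
  obtain ⟨⟨hskew, hI2, hI3⟩, hcompat⟩ := hrep
  -- R intertwines the descendent bracket and br
  have hRbr : ∀ x y z : A, R (brR x y z) = br (R x) (R y) (R z) := by
    intro x y z; rw [hbrR]; exact (hR x y z).symm
  -- compatibility in compact form
  have hC : ∀ a b : A, ρ (R a) (R b) * Rv = Rv * auxRb ρ lam R Rv a b := by
    intro a b
    rw [hcompat a b]
    simp only [auxRb, auxQ, mul_add, add_mul, smul_mul_assoc, mul_smul_comm, mul_assoc]
  -- product of two induced values
  have hmul : ∀ a b c d : A,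
      auxRb ρ lam R Rv a b * auxRb ρ lam R Rv c d
        = ρ (R a) (R b) * ρ (R c) (R d) + auxM ρ lam R a b c d * Rv
          + lam • auxM ρ lam R a b c d := by
    intro a b c d
    conv_lhs => rw [show auxRb ρ lam R Rv a b
      = ρ (R a) (R b) + auxQ ρ lam R a b * Rv + lam • auxQ ρ lam R a b from rfl]
    rw [add_mul, add_mul, mul_assoc, ← hC c d, ← mul_assoc]
    simp only [auxRb, auxM]
    simp only [mul_add, add_mul, smul_mul_assoc, mul_smul_comm, smul_add, smul_smul, mul_assoc]
    module
  -- the key 45-term identity for condition (3)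
  have hq3 : ∀ a b c d : A,
      auxQ ρ lam R (brR a b c) d
        = auxM ρ lam R a b c d + auxM ρ lam R b c a d + auxM ρ lam R c a b d := by
    intro a b c d
    simp only [auxQ]
    rw [hRbr a b c]
    simp only [hbrR, descBr, map_add, map_smul, LinearMap.add_apply, LinearMap.smul_apply]
    simp only [hI3]
    simp only [auxM, auxQ]
    simp only [mul_add, add_mul, smul_mul_assoc, mul_smul_comm, smul_add, smul_smul]
    module
  -- the key identity for condition (2)
  have hMdiff : ∀ a b c d : A,
      auxM ρ lam R a b c d - auxM ρ lam R c d a b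
        = auxQ ρ lam R (brR a b c) d - auxQ ρ lam R (brR a b d) c := by
    intro a b c d
    simp only [auxQ]
    rw [hRbr a b c, hRbr a b d]
    simp only [hbrR, descBr, map_add, map_smul, LinearMap.add_apply, LinearMap.smul_apply]
    simp only [auxM, auxQ]
    simp only [mul_add, add_mul, smul_mul_assoc, mul_smul_comm, smul_add, smul_smul]
    linear_combination (norm := module)
      hI2 (R a) (R b) (R c) d + hI2 (R a) (R b) c (R d) + lam • hI2 (R a) (R b) c d
      + hI2 (R a) b (R c) (R d) + hI2 a (R b) (R c) (R d) + lam • hI2 a b (R c) (R d)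
      + lam • hI2 (R a) b (R c) d + lam • hI2 (R a) b c (R d) + (lam * lam) • hI2 (R a) b c d
      + lam • hI2 a (R b) (R c) d + lam • hI2 a (R b) c (R d) + (lam * lam) • hI2 a (R b) c d
      + (lam * lam) • hI2 a b (R c) d + (lam * lam) • hI2 a b c (R d)
      + (lam * lam * lam) • hI2 a b c d
  refine ⟨rhoBar ρ lam R Rv, fun a b => by rw [rhoBar_apply]; rfl, ⟨?_, ?_, ?_⟩, ?_⟩
  · -- skew-symmetry
    intro a b
    rw [rhoBar_apply, rhoBar_apply]
    simp only [auxRb, auxQ]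
    rw [hskew (R a) (R b), hskew (R a) b, hskew a (R b), hskew a b]
    simp only [add_mul, neg_mul, smul_mul_assoc, smul_neg, neg_add]
    module
  · -- condition (2)
    intro a b c d
    simp only [rhoBar_apply]
    rw [hmul a b c d, hmul c d a b]
    conv_rhs => rw [show auxRb ρ lam R Rv (brR a b c) d
      = ρ (R (brR a b c)) (R d) + auxQ ρ lam R (brR a b c) d * Rv
        + lam • auxQ ρ lam R (brR a b c) d from rfl,
      show auxRb ρ lam R Rv (brR a b d) c
      = ρ (R (brR a b d)) (R c) + auxQ ρ lam R (brR a b d) c * Rv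
        + lam • auxQ ρ lam R (brR a b d) c from rfl]
    rw [hRbr a b c, hRbr a b d]
    have e1 := hI2 (R a) (R b) (R c) (R d)
    have e2 := hMdiff a b c d
    have e2r : auxM ρ lam R a b c d * Rv - auxM ρ lam R c d a b * Rv
        = auxQ ρ lam R (brR a b c) d * Rv - auxQ ρ lam R (brR a b d) c * Rv := by
      rw [← sub_mul, e2, sub_mul]
    have e2s : lam • auxM ρ lam R a b c d - lam • auxM ρ lam R c d a b
        = lam • auxQ ρ lam R (brR a b c) d - lam • auxQ ρ lam R (brR a b d) c := by
      rw [← smul_sub, e2, smul_sub]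
    linear_combination (norm := module) e1 + e2r + e2s
  · -- condition (3)
    intro a b c d
    simp only [rhoBar_apply]
    rw [hmul a b c d, hmul b c a d, hmul c a b d]
    conv_lhs => rw [show auxRb ρ lam R Rv (brR a b c) d
      = ρ (R (brR a b c)) (R d) + auxQ ρ lam R (brR a b c) d * Rv
        + lam • auxQ ρ lam R (brR a b c) d from rfl]
    rw [hRbr a b c, hq3 a b c d, hI3 (R a) (R b) (R c) (R d)]
    simp only [add_mul, smul_add]
    abel
  · -- Rota-Baxter compatibility for the induced representation
    intro a b
    simp only [rhoBar_apply]
    have hKS : auxQ ρ lam R (R a) (R b) * Rv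
        = Rv * (auxRb ρ lam R Rv (R a) b + auxRb ρ lam R Rv a (R b)
            + lam • auxRb ρ lam R Rv a b) := by
      simp only [auxQ]
      rw [add_mul, add_mul, smul_mul_assoc, hC (R a) b, hC a (R b), hC a b]
      simp only [mul_add, mul_smul_comm]
    conv_lhs => rw [show auxRb ρ lam R Rv (R a) (R b)
      = ρ (R (R a)) (R (R b)) + auxQ ρ lam R (R a) (R b) * Rv
        + lam • auxQ ρ lam R (R a) (R b) from rfl]
    rw [add_mul, add_mul, smul_mul_assoc, hC (R a) (R b), hKS]
end

section
/- Let (A,R_A) and (B,R_B) be Rota-Baxter 3-Lie algebras of weight λ, let (B,ρ) be a representation of the 3-Lie algebra A and (A,ϱ) a representation of the 3-Lie algebra B, and suppose (A,B,ρ,ϱ) is a matched pair of 3-Lie algebras, with A ⋈ B denoting A⊕B with the matched-pair bracket. Then the linear map R_A + R_B : A ⋈ B → A ⋈ B, (x+a) ↦ R_A(x) + R_B(a), is a Rota-Baxter operator of weight λ on A ⋈ B if and only if the following two conditions hold for all x1,x2 ∈ A, a1,a2 ∈ B: (1) ρ(R_A(x1),R_A(x2))∘R_B = R_B∘ρ(R_A(x1),R_A(x2))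 + R_B∘(ρ(R_A(x1),x2) + ρ(x1,R_A(x2)) + λρ(x1,x2))∘R_B + λR_B∘(ρ(R_A(x1),x2) + ρ(x1,R_A(x2)) + λρ(x1,x2)); and (2) ϱ(R_B(a1),R_B(a2))∘R_A = R_A∘ϱ(R_B(a1),R_B(a2)) + R_A∘(ϱ(R_B(a1),a2) + ϱ(a1,R_B(a2)) + λϱ(a1,a2))∘R_A + λR_A∘(ϱ(R_B(a1),a2) + ϱ(a1,R_B(a2)) + λϱ(a1,a2)). -/
/-- The matched-pair bracket on `A × B` determined by brackets on `A` and `B` and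
mutual representations `ρ`, `ϱ`. -/
def mpBr {k : Type*} [Field k] {A B : Type*} [AddCommGroup A] [Module k A]
    [AddCommGroup B] [Module k B]
    (brA : A →ₗ[k] A →ₗ[k] A →ₗ[k] A) (brB : B →ₗ[k] B →ₗ[k] B →ₗ[k] B)
    (ρ : A →ₗ[k] A →ₗ[k] Module.End k B) (ϱ : B →ₗ[k] B →ₗ[k] Module.End k A)
    (p q r : A × B) : A × B :=
  (brA p.1 q.1 r.1 + ϱ p.2 q.2 r.1 + ϱ q.2 r.2 p.1 + ϱ r.2 p.2 q.1,
   brB p.2 q.2 r.2 + ρ p.1 q.1 r.2 + ρ q.1 r.1 p.2 + ρ r.1 p.1 q.2)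

/-- `(A, B, ρ, ϱ)` is a matched pair of 3-Lie algebras. -/
def IsMatchedPair {k : Type*} [Field k] {A B : Type*} [AddCommGroup A] [Module k A]
    [AddCommGroup B] [Module k B]
    (brA : A →ₗ[k] A →ₗ[k] A →ₗ[k] A) (brB : B →ₗ[k] B →ₗ[k] B →ₗ[k] B)
    (ρ : A →ₗ[k] A →ₗ[k] Module.End k B) (ϱ : B →ₗ[k] B →ₗ[k] Module.End k A) : Prop :=
  IsRep brA ρ ∧ IsRep brB ϱ ∧
  ∃ brAB : (A × B) →ₗ[k] (A × B) →ₗ[k] (A × B) →ₗ[k] (A × B),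
    (∀ p q r : A × B, brAB p q r = mpBr brA brB ρ ϱ p q r) ∧ IsThreeLieBracket brAB

/-- `(A, B, RA, RB, ρ, ϱ)` is a matched pair of Rota-Baxter 3-Lie algebras of weight
`lam`. -/
def IsMatchedPairRB {k : Type*} [Field k] {A B : Type*} [AddCommGroup A] [Module k A]
    [AddCommGroup B] [Module k B]
    (brA : A →ₗ[k] A →ₗ[k] A →ₗ[k] A) (brB : B →ₗ[k] B →ₗ[k] B →ₗ[k] B)
    (lam : k) (RA : Module.End k A) (RB : Module.End k B)
    (ρ : A →ₗ[k] A →ₗ[k] Module.End k B) (ϱ : B →ₗ[k] B →ₗ[k] Module.End k A) : Prop :=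
  IsThreeLieBracket brA ∧ IsThreeLieBracket brB ∧
  IsRotaBaxter brA lam RA ∧ IsRotaBaxter brB lam RB ∧
  IsRBRep brA lam RA ρ RB ∧ IsRBRep brB lam RB ϱ RA ∧
  IsMatchedPair brA brB ρ ϱ

set_option maxHeartbeats 2000000 in
/-- `R_A + R_B` is a Rota-Baxter operator of weight `lam` on the matched
pair 3-Lie algebra `A ⋈ B` iff the two compatibility conditions (2.5) and (2.6) hold. -/
theorem matched_pair_RotaBaxter_iff
    {k : Type*} [Field k] {A B : Type*} [AddCommGroup A] [Module k A]
    [AddCommGroup B] [Module k B]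
    (brA : A →ₗ[k] A →ₗ[k] A →ₗ[k] A) (brB : B →ₗ[k] B →ₗ[k] B →ₗ[k] B)
    (lam : k) (RA : Module.End k A) (RB : Module.End k B)
    (hA : IsThreeLieBracket brA) (hB : IsThreeLieBracket brB)
    (hRA : IsRotaBaxter brA lam RA) (hRB : IsRotaBaxter brB lam RB)
    (ρ : A →ₗ[k] A →ₗ[k] Module.End k B) (ϱ : B →ₗ[k] B →ₗ[k] Module.End k A)
    (hρ : IsRep brA ρ) (hϱ : IsRep brB ϱ)
    (brAB : (A × B) →ₗ[k] (A × B) →ₗ[k] (A × B) →ₗ[k] (A × B))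
    (hbrAB : ∀ p q r : A × B, brAB p q r = mpBr brA brB ρ ϱ p q r)
    (hmp : IsThreeLieBracket brAB) :
    IsRotaBaxter brAB lam (RA.prodMap RB) ↔
      (RBRepCompat lam RA ρ RB ∧ RBRepCompat lam RB ϱ RA) := by
  constructor
  · intro h
    constructor
    · intro x1 x2
      ext c
      have H := congrArg Prod.snd (h (x1, 0) (x2, 0) (0, c))
      simp only [descBr, hbrAB, mpBr, LinearMap.prodMap_apply, map_zero,
        LinearMap.zero_apply, zero_add, add_zero, Prod.mk_add_mk, Prod.smul_mk,
        smul_zero, Prod.snd, LinearMap.map_smul, map_add] at H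
      simp only [Module.End.mul_apply, LinearMap.add_apply, LinearMap.smul_apply,
        LinearMap.map_smul, map_add]
      linear_combination (norm := module) H
    · intro a1 a2
      ext x
      have H := congrArg Prod.fst (h (0, a1) (0, a2) (x, 0))
      simp only [descBr, hbrAB, mpBr, LinearMap.prodMap_apply, map_zero,
        LinearMap.zero_apply, zero_add, add_zero, Prod.mk_add_mk, Prod.smul_mk,
        smul_zero, Prod.fst, LinearMap.map_smul, map_add] at H
      simp only [Module.End.mul_apply, LinearMap.add_apply, LinearMap.smul_apply,
        LinearMap.map_smul, map_add]
      linear_combination (norm := module) H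
  · rintro ⟨h1, h2⟩ ⟨x, a⟩ ⟨y, b⟩ ⟨z, c⟩
    have e1 := hRA x y z
    have e2 := hRB a b c
    simp only [descBr, map_add, LinearMap.map_smul] at e1 e2
    have f1 := LinearMap.congr_fun (h1 x y) c
    have f2 := LinearMap.congr_fun (h1 y z) a
    have f3 := LinearMap.congr_fun (h1 z x) b
    have g1 := LinearMap.congr_fun (h2 a b) z
    have g2 := LinearMap.congr_fun (h2 b c) x
    have g3 := LinearMap.congr_fun (h2 c a) y
    simp only [Module.End.mul_apply, LinearMap.add_apply, LinearMap.smul_apply,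
      LinearMap.map_smul, map_add] at f1 f2 f3 g1 g2 g3
    have : brAB ((RA.prodMap RB) (x, a)) ((RA.prodMap RB) (y, b)) ((RA.prodMap RB) (z, c))
        = (RA.prodMap RB) (descBr brAB lam (RA.prodMap RB) (x, a) (y, b) (z, c)) := by
      simp only [descBr, hbrAB, mpBr, LinearMap.prodMap_apply, map_add,
        LinearMap.map_smul, Prod.mk_add_mk, Prod.smul_mk]
      rw [Prod.mk.injEq]
      refine ⟨?_, ?_⟩
      · linear_combination (norm := module) e1 + g1 + g2 + g3
      · linear_combination (norm := module) e2 + f1 + f2 + f3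
    exact this
end

section
/- Let (A,R) be a finite-dimensional Rota-Baxter 3-Lie algebra of weight λ over a field k, and suppose the dual space A* carries a 3-Lie bracket for which −λI − R* is a Rota-Baxter operator of weight λ, where R* is the dual map of R and I the identity of A*. Let ad* denote the coadjoint representation of A on A* (⟨ad*(x,y)ξ, z⟩ = −⟨ξ,[x,y,z]⟩) and 𝔞𝔡* the coadjoint representation of A* on A (⟨𝔞𝔡*(ξ,η)x, ζ⟩ = −⟨x, [ξ,η,ζ]⟩), and define the symmetric bilinear form B on A⊕A* by B(x+ξ, y+η) = ⟨x,η⟩ + ⟨ξ,y⟩. Then (A⊕A*, B, A, A*) is a Manin triple of Rota-Baxter 3-Lie algebras of weight λ if and only if (A, A*, ad*, 𝔞𝔡*, R, −λI−R*) is a matched pair of Rota-Baxter 3-Lie algebras of weight λ. -/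
/-- The canonical pairing bilinear form on `A ⊕ A*`:
`B(x + ξ, y + η) = ⟨x, η⟩ + ⟨ξ, y⟩`. -/
def maninForm {k : Type*} [Field k] {A : Type*} [AddCommGroup A] [Module k A]
    (p q : A × Module.Dual k A) : k :=
  q.2 p.1 + p.2 q.1


section Aux
variable {k : Type*} [Field k] {V : Type*} [AddCommGroup V] [Module k V]

lemma tl_cyc (br : V →ₗ[k] V →ₗ[k] V →ₗ[k] V) (h : IsThreeLieBracket br) (a b c : V) :
    br a b c = br b c a := by
  rw [h.1 a b c, h.2.1 b a c, neg_neg]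

lemma tl_sk13 (br : V →ₗ[k] V →ₗ[k] V →ₗ[k] V) (h : IsThreeLieBracket br) (a b c : V) :
    br a b c = - br c b a := by
  rw [tl_cyc br h a b c]; exact h.1 b c a

lemma tl_comm (br : V →ₗ[k] V →ₗ[k] V →ₗ[k] V) (h : IsThreeLieBracket br)
    (x1 x2 x3 x4 z : V) :
    br x3 x4 (br x1 x2 z) - br x1 x2 (br x3 x4 z) + br (br x1 x2 x3) x4 z
      - br (br x1 x2 x4) x3 z = 0 := by
  have e := h.2.2 x1 x2 x3 x4 z
  have s : br x3 (br x1 x2 x4) z = - br (br x1 x2 x4) x3 z := h.1 x3 (br x1 x2 x4) z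
  linear_combination (norm := module) -e - s

lemma tl_J (br : V →ₗ[k] V →ₗ[k] V →ₗ[k] V) (h : IsThreeLieBracket br)
    (x1 x2 x3 x4 z : V) :
    br (br x1 x2 x3) x4 z + br x3 x4 (br x1 x2 z) + br x1 x4 (br x2 x3 z)
      + br x2 x4 (br x3 x1 z) = 0 := by
  have e1 := h.2.2 x2 x3 x1 x4 z
  have e2 := h.2.2 x1 z x2 x3 x4
  have s1 : br (br x2 x3 x1) x4 z = br (br x1 x2 x3) x4 z := by
    rw [tl_cyc br h x1 x2 x3]
  have s2 : br x1 z (br x2 x3 x4) = - br x1 (br x2 x3 x4) z := h.2.1 x1 z (br x2 x3 x4)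
  have s3 : br (br x1 z x2) x3 x4 = - br x3 x4 (br x1 x2 z) := by
    rw [h.2.1 x1 z x2, tl_cyc br h _ x3 x4]
    simp [map_neg]
  have s4 : br x2 (br x1 z x3) x4 = - br x2 x4 (br x3 x1 z) := by
    have : br x1 z x3 = br x3 x1 z := by
      rw [h.2.1 x1 z x3, h.1 x1 x3 z, neg_neg]
    rw [this, h.2.1 x2 (br x3 x1 z) x4]
  have s5 : br x2 x3 (br x1 z x4) = - br x2 x3 (br x1 x4 z) := by
    rw [h.2.1 x1 z x4, map_neg]
  linear_combination (norm := module) -e1 - s1 + e2 - s2 + s3 + s4 + s5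

end Aux

section Aux2
variable {k : Type*} [Field k] {A : Type*} [AddCommGroup A] [Module k A]

lemma dual_sep {u v : A} (h : ∀ ζ : Module.Dual k A, ζ u = ζ v) : u = v := by
  rw [← sub_eq_zero, ← Module.forall_dual_apply_eq_zero_iff k (u - v)]
  intro φ
  simp [h φ]

lemma adS_isRep (brA : A →ₗ[k] A →ₗ[k] A →ₗ[k] A) (hA : IsThreeLieBracket brA)
    (adS : A →ₗ[k] A →ₗ[k] Module.End k (Module.Dual k A))
    (hadS : ∀ (x y : A) (ξ : Module.Dual k A) (z : A), adS x y ξ z = - ξ (brA x y z)) :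
    IsRep brA adS := by
  refine ⟨?_, ?_, ?_⟩
  · intro x y
    apply LinearMap.ext; intro ξ; apply LinearMap.ext; intro z
    simp only [LinearMap.neg_apply, hadS]
    rw [hA.1 x y z, map_neg, neg_neg]
  · intro x1 x2 x3 x4
    apply LinearMap.ext; intro ξ; apply LinearMap.ext; intro z
    simp only [LinearMap.sub_apply, Module.End.mul_apply, hadS, map_neg,
      LinearMap.neg_apply, neg_neg]
    have hc := congrArg (⇑ξ) (tl_comm brA hA x1 x2 x3 x4 z)
    simp only [map_add, map_sub, map_zero] at hc
    linear_combination hc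
  · intro x1 x2 x3 x4
    apply LinearMap.ext; intro ξ; apply LinearMap.ext; intro z
    simp only [LinearMap.add_apply, Module.End.mul_apply, hadS, map_neg,
      LinearMap.neg_apply, neg_neg]
    have hc := congrArg (⇑ξ) (tl_J brA hA x1 x2 x3 x4 z)
    simp only [map_add, map_zero] at hc
    linear_combination -hc

lemma adSD_isRep (brD : Module.Dual k A →ₗ[k] Module.Dual k A →ₗ[k] Module.Dual k A →ₗ[k] Module.Dual k A)
    (hD : IsThreeLieBracket brD)
    (adSD : Module.Dual k A →ₗ[k] Module.Dual k A →ₗ[k] Module.End k A)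
    (hadSD : ∀ (ξ η : Module.Dual k A) (x : A) (ζ : Module.Dual k A),
        ζ (adSD ξ η x) = - brD ξ η ζ x) :
    IsRep brD adSD := by
  refine ⟨?_, ?_, ?_⟩
  · intro ξ η
    apply LinearMap.ext; intro x
    apply dual_sep (k := k); intro ζ
    simp only [LinearMap.neg_apply, map_neg, hadSD]
    have := LinearMap.congr_fun (hD.1 ξ η ζ) x
    simp only [LinearMap.neg_apply] at this
    linear_combination -this
  · intro ξ1 ξ2 ξ3 ξ4
    apply LinearMap.ext; intro x
    apply dual_sep (k := k); intro ζ
    simp only [LinearMap.sub_apply, Module.End.mul_apply, map_sub, hadSD, map_neg,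
      LinearMap.neg_apply, neg_neg]
    have hc := LinearMap.congr_fun (tl_comm brD hD ξ1 ξ2 ξ3 ξ4 ζ) x
    simp only [LinearMap.add_apply, LinearMap.sub_apply, LinearMap.zero_apply] at hc
    linear_combination hc
  · intro ξ1 ξ2 ξ3 ξ4
    apply LinearMap.ext; intro x
    apply dual_sep (k := k); intro ζ
    simp only [LinearMap.add_apply, Module.End.mul_apply, map_add, hadSD, map_neg,
      LinearMap.neg_apply, neg_neg]
    have hc := LinearMap.congr_fun (tl_J brD hD ξ1 ξ2 ξ3 ξ4 ζ) x
    simp only [LinearMap.add_apply, LinearMap.zero_apply] at hc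
    linear_combination -hc

end Aux2

section Aux3
variable {k : Type*} [Field k] {A : Type*} [AddCommGroup A] [Module k A]

lemma adS_compat (brA : A →ₗ[k] A →ₗ[k] A →ₗ[k] A) (lam : k) (R : Module.End k A)
    (hR : IsRotaBaxter brA lam R)
    (RD : Module.End k (Module.Dual k A))
    (hRD : ∀ ξ : Module.Dual k A, RD ξ = -(lam • ξ) - R.dualMap ξ)
    (adS : A →ₗ[k] A →ₗ[k] Module.End k (Module.Dual k A))
    (hadS : ∀ (x y : A) (ξ : Module.Dual k A) (z : A), adS x y ξ z = - ξ (brA x y z)) :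
    RBRepCompat lam R adS RD := by
  intro x1 x2
  apply LinearMap.ext; intro ξ; apply LinearMap.ext; intro z
  have hs := congrArg (⇑ξ) (hR x1 x2 z)
  simp only [descBr, map_add, map_smul, smul_eq_mul, mul_add] at hs
  simp only [Module.End.mul_apply, LinearMap.add_apply, LinearMap.smul_apply, hadS, hRD,
    LinearMap.sub_apply, LinearMap.neg_apply, LinearMap.dualMap_apply, smul_eq_mul,
    map_neg, map_add, map_smul, neg_neg, neg_add, mul_neg]
  linear_combination -hs

lemma adSD_compat
    (brD : Module.Dual k A →ₗ[k] Module.Dual k A →ₗ[k] Module.Dual k A →ₗ[k] Module.Dual k A)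
    (lam : k) (R : Module.End k A)
    (RD : Module.End k (Module.Dual k A))
    (hRD : ∀ ξ : Module.Dual k A, RD ξ = -(lam • ξ) - R.dualMap ξ)
    (hRDrb : IsRotaBaxter brD lam RD)
    (adSD : Module.Dual k A →ₗ[k] Module.Dual k A →ₗ[k] Module.End k A)
    (hadSD : ∀ (ξ η : Module.Dual k A) (x : A) (ζ : Module.Dual k A),
        ζ (adSD ξ η x) = - brD ξ η ζ x) :
    RBRepCompat lam RD adSD R := by
  have hRdm : ∀ (φ : Module.Dual k A) (u : A), φ (R u) = -(lam * φ u) - RD φ u := by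
    intro φ u
    rw [hRD φ]
    simp only [LinearMap.sub_apply, LinearMap.neg_apply, LinearMap.smul_apply,
      LinearMap.dualMap_apply, smul_eq_mul]
    ring
  intro ξ1 ξ2
  apply LinearMap.ext; intro x
  apply dual_sep (k := k); intro ζ
  have hs := LinearMap.congr_fun (hRDrb ξ1 ξ2 ζ) x
  simp only [descBr, map_add, map_smul, LinearMap.add_apply, LinearMap.smul_apply,
    smul_eq_mul, mul_add] at hs
  simp only [Module.End.mul_apply, LinearMap.add_apply, LinearMap.smul_apply, map_add,
    map_smul, smul_eq_mul, hRdm, hadSD, map_neg, neg_neg, neg_add, mul_neg]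
  linear_combination -hs

end Aux3

set_option maxHeartbeats 2000000 in
/-- `(A ⊕ A*, B, A, A*)` is a Manin triple of Rota-Baxter 3-Lie algebras
of weight `lam` iff `(A, A*, ad*, 𝔞𝔡*, R, -λI - R*)` is a matched pair of Rota-Baxter
3-Lie algebras of weight `lam`. -/
theorem manin_triple_iff_matched_pair
    {k : Type*} [Field k] {A : Type*} [AddCommGroup A] [Module k A]
    [FiniteDimensional k A]
    (brA : A →ₗ[k] A →ₗ[k] A →ₗ[k] A) (lam : k) (R : Module.End k A)
    (hA : IsThreeLieBracket brA) (hR : IsRotaBaxter brA lam R)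
    (brD : Module.Dual k A →ₗ[k] Module.Dual k A →ₗ[k] Module.Dual k A →ₗ[k] Module.Dual k A)
    (hD : IsThreeLieBracket brD)
    (RD : Module.End k (Module.Dual k A))
    (hRD : ∀ ξ : Module.Dual k A, RD ξ = -(lam • ξ) - R.dualMap ξ)
    (hRDrb : IsRotaBaxter brD lam RD)
    (adS : A →ₗ[k] A →ₗ[k] Module.End k (Module.Dual k A))
    (hadS : ∀ (x y : A) (ξ : Module.Dual k A) (z : A), adS x y ξ z = - ξ (brA x y z))
    (adSD : Module.Dual k A →ₗ[k] Module.Dual k A →ₗ[k] Module.End k A)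
    (hadSD : ∀ (ξ η : Module.Dual k A) (x : A) (ζ : Module.Dual k A),
        ζ (adSD ξ η x) = - brD ξ η ζ x) :
    (∃ brT : (A × Module.Dual k A) →ₗ[k] (A × Module.Dual k A) →ₗ[k]
        (A × Module.Dual k A) →ₗ[k] (A × Module.Dual k A),
      -- the big algebra is a Rota-Baxter 3-Lie algebra of weight lam
      IsThreeLieBracket brT ∧
      IsRotaBaxter brT lam (R.prodMap RD) ∧
      -- the bilinear form is symmetric, nondegenerate and invariant
      (∀ p q : A × Module.Dual k A, maninForm p q = maninForm q p) ∧
      (∀ p : A × Module.Dual k A, (∀ q, maninForm p q = 0) → p = 0) ∧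
      (∀ p q r s : A × Module.Dual k A,
          maninForm (brT p q r) s + maninForm (brT p q s) r = 0) ∧
      (∀ p q : A × Module.Dual k A,
          maninForm (R.prodMap RD p) q + maninForm p (R.prodMap RD q)
            + lam * maninForm p q = 0) ∧
      -- A and A* are Rota-Baxter 3-Lie subalgebras, with the given structures
      (∀ x y z : A, brT (x, 0) (y, 0) (z, 0) = (brA x y z, 0)) ∧
      (∀ ξ η ζ : Module.Dual k A, brT (0, ξ) (0, η) (0, ζ) = (0, brD ξ η ζ)) ∧
      -- the projection conditions P1[x1,x2,a1] = 0 and P2[a1,a2,x1] = 0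
      (∀ (x y : A) (ξ : Module.Dual k A), (brT (x, 0) (y, 0) (0, ξ)).1 = 0) ∧
      (∀ (ξ η : Module.Dual k A) (x : A), (brT (0, ξ) (0, η) (x, 0)).2 = 0))
    ↔ IsMatchedPairRB brA brD lam R RD adS adSD := by
  have F1 : IsRep brA adS := adS_isRep brA hA adS hadS
  have F2 : IsRep brD adSD := adSD_isRep brD hD adSD hadSD
  have F3 : RBRepCompat lam R adS RD := adS_compat brA lam R hR RD hRD adS hadS
  have F4 : RBRepCompat lam RD adSD R := adSD_compat brD lam R RD hRD hRDrb adSD hadSD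
  constructor
  · rintro ⟨brT, h3, -, -, -, hinv, -, hpure1, hpure2, hproj1, hproj2⟩
    have hcyc : ∀ p q r, brT p q r = brT q r p := fun p q r => by
      rw [h3.1 p q r, h3.2.1 q p r, neg_neg]
    have cvvd : ∀ (x y : A) (ζ : Module.Dual k A),
        brT (x, 0) (y, 0) (0, ζ) = (0, adS x y ζ) := by
      intro x y ζ
      refine Prod.ext (hproj1 x y ζ) (LinearMap.ext fun w => ?_)
      have hi := hinv (x, 0) (y, 0) (0, ζ) (w, 0)
      rw [hpure1 x y w] at hi
      simp only [maninForm, LinearMap.zero_apply, map_zero, add_zero, zero_add] at hi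
      rw [hadS]
      linear_combination hi
    have cddv : ∀ (ξ η : Module.Dual k A) (x : A),
        brT (0, ξ) (0, η) (x, 0) = (adSD ξ η x, 0) := by
      intro ξ η x
      refine Prod.ext ?_ (hproj2 ξ η x)
      apply dual_sep (k := k); intro ζ
      have hi := hinv (0, ξ) (0, η) (x, 0) (0, ζ)
      rw [hpure2 ξ η ζ] at hi
      simp only [maninForm, LinearMap.zero_apply, map_zero, add_zero, zero_add] at hi
      rw [hadSD]
      linear_combination hi
    have cdvv : ∀ (ξ : Module.Dual k A) (y z : A),
        brT (0, ξ) (y, 0) (z, 0) = (0, adS y z ξ) := by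
      intro ξ y z; rw [hcyc]; exact cvvd y z ξ
    have cvdv : ∀ (x : A) (η : Module.Dual k A) (z : A),
        brT (x, 0) (0, η) (z, 0) = (0, adS z x η) := by
      intro x η z; rw [hcyc, hcyc]; exact cvvd z x η
    have cvdd : ∀ (x : A) (η ζ : Module.Dual k A),
        brT (x, 0) (0, η) (0, ζ) = (adSD η ζ x, 0) := by
      intro x η ζ; rw [hcyc]; exact cddv η ζ x
    have cdvd : ∀ (ξ : Module.Dual k A) (y : A) (ζ : Module.Dual k A),
        brT (0, ξ) (y, 0) (0, ζ) = (adSD ζ ξ y, 0) := by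
      intro ξ y ζ; rw [hcyc, hcyc]; exact cddv ζ ξ y
    have key : ∀ p q r, brT p q r = mpBr brA brD adS adSD p q r := by
      intro p q r
      obtain ⟨x, ξ⟩ := p; obtain ⟨y, η⟩ := q; obtain ⟨z, ζ⟩ := r
      have hx : ((x, ξ) : A × Module.Dual k A) = (x, 0) + (0, ξ) := by simp
      have hy : ((y, η) : A × Module.Dual k A) = (y, 0) + (0, η) := by simp
      have hz : ((z, ζ) : A × Module.Dual k A) = (z, 0) + (0, ζ) := by simp
      conv_lhs => rw [hx, hy, hz]
      simp only [map_add, LinearMap.add_apply]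
      rw [hpure1, hpure2, cvvd, cddv, cdvv, cvdv, cvdd, cdvd]
      simp only [mpBr, Prod.mk_add_mk, Prod.mk.injEq]
      constructor <;> abel
    exact ⟨hA, hD, hR, hRDrb, ⟨F1, F3⟩, ⟨F2, F4⟩, F1, F2, ⟨brT, key, h3⟩⟩
  · rintro ⟨-, -, -, -, -, -, -, -, brAB, hbr, h3⟩
    refine ⟨brAB, h3, ?_, ?_, ?_, ?_, ?_, ?_, ?_, ?_, ?_⟩
    · -- Rota-Baxter on the double
      intro p q r
      have hr1 := hR p.1 q.1 r.1
      simp only [descBr, map_add, map_smul] at hr1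
      have hr2 := hRDrb p.2 q.2 r.2
      simp only [descBr, map_add, map_smul] at hr2
      have g1 := LinearMap.congr_fun (F4 p.2 q.2) r.1
      have g2 := LinearMap.congr_fun (F4 q.2 r.2) p.1
      have g3 := LinearMap.congr_fun (F4 r.2 p.2) q.1
      have e1 := LinearMap.congr_fun (F3 p.1 q.1) r.2
      have e2 := LinearMap.congr_fun (F3 q.1 r.1) p.2
      have e3 := LinearMap.congr_fun (F3 r.1 p.1) q.2
      simp only [Module.End.mul_apply, LinearMap.add_apply, LinearMap.smul_apply,
        map_add, map_smul] at g1 g2 g3 e1 e2 e3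
      simp only [descBr, hbr, mpBr, LinearMap.prodMap_apply, Prod.mk_add_mk,
        Prod.smul_mk, Prod.fst, Prod.snd, map_add, map_smul, Prod.mk.injEq]
      constructor
      · linear_combination (norm := module) hr1 + g1 + g2 + g3
      · linear_combination (norm := module) hr2 + e1 + e2 + e3
    · intro p q; unfold maninForm; ring
    · intro p hp
      have h1 : p.2 = 0 := by
        apply LinearMap.ext; intro y
        have := hp (y, 0)
        simpa [maninForm] using this
      have h2 : p.1 = 0 := by
        rw [← Module.forall_dual_apply_eq_zero_iff k p.1]
        intro η
        have := hp (0, η)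
        simpa [maninForm] using this
      exact Prod.ext h2 h1
    · -- invariance
      intro p q r s
      simp only [maninForm, hbr, mpBr, map_add, LinearMap.add_apply, hadS, hadSD]
      have u1 := congrArg (⇑p.2) (hA.2.1 q.1 r.1 s.1)
      rw [map_neg] at u1
      have u2 := congrArg (⇑q.2) (tl_sk13 brA hA r.1 p.1 s.1)
      rw [map_neg] at u2
      have u3 := LinearMap.congr_fun (hD.2.1 q.2 r.2 s.2) p.1
      rw [LinearMap.neg_apply] at u3
      have u4 := LinearMap.congr_fun (tl_sk13 brD hD r.2 p.2 s.2) q.1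
      rw [LinearMap.neg_apply] at u4
      linear_combination -u1 - u2 - u3 - u4
    · intro p q
      simp only [maninForm, LinearMap.prodMap_apply, hRD, LinearMap.sub_apply,
        LinearMap.neg_apply, LinearMap.smul_apply, LinearMap.dualMap_apply, smul_eq_mul]
      ring
    · intro x y z
      simp [hbr, mpBr]
    · intro ξ η ζ
      simp [hbr, mpBr]
    · intro x y ξ
      simp [hbr, mpBr]
    · intro ξ η x
      simp [hbr, mpBr]
end

section
/- Let (A, π = [·,·,·], R) be a Rota-Baxter 3-Lie algebra of weight λ. Suppose trilinear skew-symmetric maps πᵢ : A×A×A → A and linear maps Rᵢ : A → A (i ≥ 0) with π₀ = π, R₀ = R are such that π_t = Σᵢ tⁱπᵢ defines a 3-Lie algebra structure on A[[t]] and R_t = Σᵢ tⁱRᵢ is a Rota-Baxter operator of weight λ for π_t (equivalently, for every k ≥ 0: Σ_{i+j=k}( πᵢ(πⱼ(v,w,x),y,z) + πᵢ(x,πⱼ(v,w,y),z) + πᵢ(x,y,πⱼ(v,w,z)) − πᵢ(v,w,πⱼ(x,y,z)) ) = 0, and for every n ≥ 0: Σ_{i+j+k+l=n} πᵢ(Rⱼx,R_k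 y,R_l z) = Σ_{i+j+k+l=n} Rᵢ( πⱼ(R_k x,R_l y,z) + πⱼ(x,R_k y,R_l z) + πⱼ(R_k x,y,R_l z) ) + λ Σ_{i+j+k=n} Rᵢ( πⱼ(R_k x,y,z) + πⱼ(x,R_k y,z) + πⱼ(x,y,R_k z) ) + λ² Σ_{i+j=n} Rᵢ πⱼ(x,y,z) for all x,y,z,v,w ∈ A). Then (π₁, R₁) is a 2-cocycle of the Rota-Baxter 3-Lie algebra (A,R) with coefficients in the adjoint representation: ∂π₁ = 0 and ∂_R R₁ + δπ₁ = 0, i.e., explicitly, (1) π(π₁(v,w,x),y,z)+π(x,π₁(v,w,y),z)+π(x,y,π₁(v,w,z))−π(v,w,π₁(x,y,z)) + π₁(π(v,w,x),y,z)+π₁(x,π(v,w,y),z)+π₁(x,y,π(v,w,z))−π₁(v,w,π(x,y,z)) = 0, and (2) −R₁([x,y,z]_R) + [R(x),R(y),R₁(z)] − R([R(x),y,R₁(z)]+[x,R(y),R₁(z)]+λ[x,y,R₁(z)]) + [R(y),R(z),R₁(x)] − R([R(y),z,R₁(x)]+[y,R(z),R₁(x)]+λ[y,z,R₁(x)]) +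 [R(z),R(x),R₁(y)] − R([R(z),x,R₁(y)]+[z,R(x),R₁(y)]+λ[z,x,R₁(y)]) + π₁(R(x),R(y),R(z)) − λ²Rπ₁(x,y,z) − λR(π₁(R(x),y,z)+π₁(x,R(y),z)+π₁(x,y,R(z))) − R(π₁(R(x),R(y),z)+π₁(x,R(y),R(z))+π₁(R(x),y,R(z))) = 0 for all x,y,z ∈ A. -/
open Finset in
/-- if `(πᵢ, Rᵢ)` generate a one-parameter formal deformation of the
Rota-Baxter 3-Lie algebra `(A, π, R)` of weight `lam` (i.e. equations (4.3) and (4.4)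
hold in every degree), then `(π₁, R₁)` is a 2-cocycle of `(A, R)` with coefficients in
the adjoint representation: `∂ π₁ = 0` and `∂_R R₁ + δ π₁ = 0` (written explicitly). -/
theorem deformation_infinitesimal_is_two_cocycle
    {k : Type*} [Field k] {A : Type*} [AddCommGroup A] [Module k A]
    (br : A →ₗ[k] A →ₗ[k] A →ₗ[k] A) (lam : k) (R : Module.End k A)
    (hbr : IsThreeLieBracket br) (hR : IsRotaBaxter br lam R)
    (π : ℕ → (A →ₗ[k] A →ₗ[k] A →ₗ[k] A)) (Rf : ℕ → Module.End k A)
    (hπ0 : π 0 = br) (hR0 : Rf 0 = R)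
    (hskew1 : ∀ (i : ℕ) (x y z : A), π i x y z = - π i y x z)
    (hskew2 : ∀ (i : ℕ) (x y z : A), π i x y z = - π i x z y)
    (h43 : ∀ (K : ℕ) (v w x y z : A),
      ∑ i ∈ Finset.range (K + 1),
        (π i (π (K - i) v w x) y z + π i x (π (K - i) v w y) z
          + π i x y (π (K - i) v w z) - π i v w (π (K - i) x y z)) = 0)
    (h44 : ∀ (N : ℕ) (x y z : A),
      (∑ i ∈ Finset.range (N + 1), ∑ j ∈ Finset.range (N + 1 - i),
        ∑ m ∈ Finset.range (N + 1 - i - j),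
          π i (Rf j x) (Rf m y) (Rf (N - i - j - m) z))
      = (∑ i ∈ Finset.range (N + 1), ∑ j ∈ Finset.range (N + 1 - i),
          ∑ m ∈ Finset.range (N + 1 - i - j),
            Rf i (π j (Rf m x) (Rf (N - i - j - m) y) z
              + π j x (Rf m y) (Rf (N - i - j - m) z)
              + π j (Rf m x) y (Rf (N - i - j - m) z)))
        + lam • (∑ i ∈ Finset.range (N + 1), ∑ j ∈ Finset.range (N + 1 - i),
            Rf i (π j (Rf (N - i - j) x) y z + π j x (Rf (N - i - j) y) z
              + π j x y (Rf (N - i - j) z)))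
        + lam ^ 2 • (∑ i ∈ Finset.range (N + 1), Rf i (π (N - i) x y z))) :
    -- (1) : ∂ π₁ = 0
    (∀ v w x y z : A,
      br (π 1 v w x) y z + br x (π 1 v w y) z + br x y (π 1 v w z)
        - br v w (π 1 x y z)
        + π 1 (br v w x) y z + π 1 x (br v w y) z + π 1 x y (br v w z)
        - π 1 v w (br x y z) = 0)
    ∧
    -- (2) : ∂_R R₁ + δ π₁ = 0
    (∀ x y z : A,
      - Rf 1 (descBr br lam R x y z)
        + br (R x) (R y) (Rf 1 z)
        - R (br (R x) y (Rf 1 z) + br x (R y) (Rf 1 z) + lam • br x y (Rf 1 z))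
        + br (R y) (R z) (Rf 1 x)
        - R (br (R y) z (Rf 1 x) + br y (R z) (Rf 1 x) + lam • br y z (Rf 1 x))
        + br (R z) (R x) (Rf 1 y)
        - R (br (R z) x (Rf 1 y) + br z (R x) (Rf 1 y) + lam • br z x (Rf 1 y))
        + π 1 (R x) (R y) (R z)
        - lam ^ 2 • R (π 1 x y z)
        - lam • R (π 1 (R x) y z + π 1 x (R y) z + π 1 x y (R z))
        - R (π 1 (R x) (R y) z + π 1 x (R y) (R z) + π 1 (R x) y (R z)) = 0) := by
  constructor
  · intro v w x y z
    have h := h43 1 v w x y z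
    simp only [Finset.sum_range_succ, Finset.sum_range_zero, Nat.sub_self, Nat.sub_zero,
      hπ0, zero_add] at h
    linear_combination (norm := module) h
  · intro x y z
    have h := h44 1 x y z
    simp only [Finset.sum_range_succ, Finset.sum_range_zero] at h
    norm_num [hπ0, hR0] at h
    have cyc : ∀ a b c : A, br a b c = br b c a := fun a b c => by
      rw [hbr.1 a b c, hbr.2.1 b a c, neg_neg]
    have cab : ∀ a b c : A, br a b c = br c a b := fun a b c =>
      (cyc a b c).trans (cyc b c a)
    rw [cab (R x) (Rf 1 y) (R z), cyc (Rf 1 x) (R y) (R z),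
      cab (R x) (Rf 1 y) z, cab x (Rf 1 y) (R z),
      cyc (Rf 1 x) (R y) z, cyc (Rf 1 x) y (R z),
      cyc (Rf 1 x) y z, cab x (Rf 1 y) z] at h
    simp only [descBr, map_add, map_smul]
    linear_combination (norm := module) h
end

section
/- Let (A,R) be a Rota-Baxter 3-Lie algebra of weight λ, (V,ρ,R_V) a representation of it, and K : V → A an O-operator on (A,R) associated with (V,ρ,R_V). Define ϱ_K : V×V → gl(A) by ϱ_K(u,v)x = [K(u),K(v),x] − K( ρ(K(v),x)u + ρ(x,K(u))v ). Then (A, ϱ_K, R) is a representation of the Rota-Baxter 3-Lie algebra (V, [·,·,·]_K, R_V), where [u,v,w]_K = ρ(K(u),K(v))w + ρ(K(v),K(w))u + ρ(K(w),K(u))v. -/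
set_option maxHeartbeats 1000000 in
/-- if `K : V → A` is an O-operator on the Rota-Baxter 3-Lie algebra
`(A, R)` of weight `lam` associated with `(V, ρ, Rv)`, then `(A, ϱ_K, R)` with
`ϱ_K(u,v)x = [K u, K v, x] - K (ρ(K v, x) u + ρ(x, K u) v)` is a representation of the
Rota-Baxter 3-Lie algebra `(V, [·,·,·]_K, Rv)`. -/
theorem O_operator_induced_representation
    {k : Type*} [Field k] {A V : Type*} [AddCommGroup A] [Module k A]
    [AddCommGroup V] [Module k V]
    (br : A →ₗ[k] A →ₗ[k] A →ₗ[k] A) (lam : k) (R : Module.End k A)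
    (hbr : IsThreeLieBracket br) (hR : IsRotaBaxter br lam R)
    (ρ : A →ₗ[k] A →ₗ[k] Module.End k V) (Rv : Module.End k V)
    (hrep : IsRBRep br lam R ρ Rv)
    (K : V →ₗ[k] A)
    (hK : ∀ u v w : V,
      br (K u) (K v) (K w)
        = K (ρ (K u) (K v) w + ρ (K v) (K w) u + ρ (K w) (K u) v))
    (hKR : ∀ v : V, K (Rv v) = R (K v))
    (brK : V →ₗ[k] V →ₗ[k] V →ₗ[k] V)
    (hbrK : ∀ u v w : V,
      brK u v w = ρ (K u) (K v) w + ρ (K v) (K w) u + ρ (K w) (K u) v) :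
    ∃ ϱK : V →ₗ[k] V →ₗ[k] Module.End k A,
      (∀ (u v : V) (x : A),
        ϱK u v x = br (K u) (K v) x - K (ρ (K v) x u + ρ x (K u) v)) ∧
      IsRBRep brK lam Rv ϱK R := by
  obtain ⟨hsk1, hsk2, hFI⟩ := hbr
  obtain ⟨⟨hρsk, hρ2, hρ3⟩, hcomp⟩ := hrep
  obtain ⟨F, h1⟩ : ∃ F : V →ₗ[k] V →ₗ[k] Module.End k A,
      ∀ (u v : V) (x : A),
        F u v x = br (K u) (K v) x - K (ρ (K v) x u + ρ x (K u) v) := by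
    refine ⟨LinearMap.mk₂ k
      (fun u v => br (K u) (K v) - K ∘ₗ ((ρ (K v)).flip u + (ρ.flip (K u)).flip v))
      (by intro u u' v; ext x; simp; abel)
      (by intro c u v; ext x; simp; module)
      (by intro u v v'; ext x; simp; abel)
      (by intro c u v; ext x; simp; module), ?_⟩
    intro u v x
    simp only [LinearMap.mk₂_apply, LinearMap.sub_apply, LinearMap.comp_apply,
      LinearMap.add_apply, LinearMap.flip_apply, map_add]
  -- cyclic permutation
  have hcyc : ∀ x y z : A, br x y z = br y z x := by
    intro x y z; rw [hsk1 x y z, hsk2 y x z, neg_neg]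
  -- pointwise skew of ρ
  have hρsw : ∀ (y z : A) (w : V), ρ y z w = - ρ z y w := by
    intro y z w; rw [hρsk]; simp
  -- K-mapped swaps
  have hswK : ∀ (y z : A) (w : V), K (ρ y z w) = - K (ρ z y w) := by
    intro y z w; rw [← map_neg]; exact congrArg K (hρsw y z w)
  have hsw2K : ∀ (y z y' z' : A) (w : V),
      K (ρ y z (ρ y' z' w)) = - K (ρ y z (ρ z' y' w)) := by
    intro y z y' z' w
    rw [hρsw y' z' w, map_neg, map_neg]
  -- pointwise K-mapped rep identities
  have h2K : ∀ (y1 y2 y3 y4 : A) (w : V),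
      K (ρ y1 y2 (ρ y3 y4 w)) - K (ρ y3 y4 (ρ y1 y2 w))
        = K (ρ (br y1 y2 y3) y4 w) - K (ρ (br y1 y2 y4) y3 w) := by
    intro y1 y2 y3 y4 w
    rw [← map_sub, ← map_sub]
    refine congrArg K ?_
    have h := DFunLike.congr_fun (hρ2 y1 y2 y3 y4) w
    simpa using h
  have h3K : ∀ (y1 y2 y3 y4 : A) (w : V),
      K (ρ (br y1 y2 y3) y4 w)
        = K (ρ y1 y2 (ρ y3 y4 w)) + K (ρ y2 y3 (ρ y1 y4 w)) + K (ρ y3 y1 (ρ y2 y4 w)) := by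
    intro y1 y2 y3 y4 w
    rw [← map_add, ← map_add]
    refine congrArg K ?_
    have h := DFunLike.congr_fun (hρ3 y1 y2 y3 y4) w
    simpa using h
  -- orientation change in first ρ slot, K-mapped
  have hKρl : ∀ {y y' : A}, y = y' → ∀ (z : A) (w : V), K (ρ y z w) = K (ρ y' z w) := by
    intro y y' h z w; rw [h]
  -- K of brK
  have hKbr : ∀ u v w : V, K (brK u v w) = br (K u) (K v) (K w) := by
    intro u v w; rw [hbrK]; exact (hK u v w).symm
  -- F on image of K
  have LK : ∀ (u v w : V), F u v (K w) = K (ρ (K u) (K v) w) := by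
    intro u v w
    rw [h1, hK]
    simp only [map_add]
    abel
  -- product expansion
  have Lprod : ∀ (u1 u2 u3 u4 : V) (x : A),
      F u1 u2 (F u3 u4 x)
        = br (K u1) (K u2) (br (K u3) (K u4) x)
          - K (ρ (K u1) (K u2) (ρ (K u4) x u3))
          - K (ρ (K u1) (K u2) (ρ x (K u3) u4))
          - K (ρ (K u2) (br (K u3) (K u4) x) u1)
          - K (ρ (br (K u3) (K u4) x) (K u1) u2) := by
    intro u1 u2 u3 u4 x
    rw [h1 u3 u4 x, map_sub, LK, h1]
    simp only [map_add]
    abel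
  -- expansion of F (brK u1 u2 u3) u4
  have LB : ∀ (u1 u2 u3 u4 : V) (x : A),
      F (brK u1 u2 u3) u4 x
        = br (br (K u1) (K u2) (K u3)) (K u4) x
          - K (ρ (K u4) x (ρ (K u1) (K u2) u3))
          - K (ρ (K u4) x (ρ (K u2) (K u3) u1))
          - K (ρ (K u4) x (ρ (K u3) (K u1) u2))
          - K (ρ x (br (K u1) (K u2) (K u3)) u4) := by
    intro u1 u2 u3 u4 x
    rw [h1, hKbr, hbrK]
    simp only [map_add]
    abel
  -- derived bracket identity
  have hFI' : ∀ p q r s t : A,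
      br (br p q r) s t
        = br p q (br r s t) + br q r (br p s t) + br r p (br q s t) := by
    intro p q r s t
    have e := hFI s t p q r
    rw [hcyc (br p q r) s t, e,
        hcyc (br s t p) q r, hcyc s t p, hcyc t p s,
        hcyc p (br s t q) r, hcyc (br s t q) r p, hcyc s t q, hcyc t q s,
        hcyc s t r, hcyc t r s]
    abel
  have Gskew : ∀ u v : V, F u v = - F v u := by
    intro u v; ext x
    rw [LinearMap.neg_apply, h1, h1]
    have hv : K (ρ (K v) x u + ρ x (K u) v) = - K (ρ (K u) x v + ρ x (K v) u) := by
      rw [← map_neg]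
      refine congrArg K ?_
      rw [hρsw (K v) x u, hρsw x (K u) v]
      abel
    rw [hsk1 (K u) (K v) x, hv]
    abel
  have Grid2 : ∀ u1 u2 u3 u4 : V,
      F u1 u2 * F u3 u4 - F u3 u4 * F u1 u2
        = F (brK u1 u2 u3) u4 - F (brK u1 u2 u4) u3 := by
    intro u1 u2 u3 u4; ext x
    simp only [LinearMap.sub_apply, Module.End.mul_apply]
    rw [Lprod u1 u2 u3 u4 x, Lprod u3 u4 u1 u2 x, LB u1 u2 u3 u4 x, LB u1 u2 u4 u3 x]
    linear_combination (norm := module)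
      hFI (K u1) (K u2) (K u3) (K u4) x
      + hsk1 (K u3) (br (K u1) (K u2) (K u4)) x
      - h2K (K u1) (K u2) (K u4) x u3
      + hswK (K u4) (br (K u1) (K u2) x) u3
      - hswK x (br (K u1) (K u2) (K u4)) u3
      - hsw2K (K u1) (K u2) x (K u3) u4
      + h2K (K u1) (K u2) (K u3) x u4
      + hswK x (br (K u1) (K u2) (K u3)) u4
      - hswK (K u2) (br (K u3) (K u4) x) u1
      + h3K (K u3) (K u4) x (K u2) u1
      + hsw2K (K u3) (K u4) x (K u2) u1
      + hsw2K (K u4) x (K u3) (K u2) u1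
      + hswK x (K u3) (ρ (K u4) (K u2) u1)
      - hsw2K (K u3) x (K u4) (K u2) u1
      - h3K (K u3) (K u4) x (K u1) u2
      - hswK x (K u3) (ρ (K u4) (K u1) u2)
  have Grid3 : ∀ u1 u2 u3 u4 : V,
      F (brK u1 u2 u3) u4
        = F u1 u2 * F u3 u4 + F u2 u3 * F u1 u4 + F u3 u1 * F u2 u4 := by
    intro u1 u2 u3 u4; ext x
    simp only [LinearMap.add_apply, Module.End.mul_apply]
    rw [LB u1 u2 u3 u4 x, Lprod u1 u2 u3 u4 x, Lprod u2 u3 u1 u4 x, Lprod u3 u1 u2 u4 x]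
    linear_combination (norm := module)
      hFI' (K u1) (K u2) (K u3) (K u4) x
      - h2K (K u4) x (K u1) (K u2) u3
      + hKρl (hcyc (K u1) (K u4) x) (K u2) u3
      + hswK (K u1) (br (K u2) (K u4) x) u3
      - hKρl (hcyc (K u2) (K u4) x) (K u1) u3
      - hswK x (br (K u1) (K u2) (K u3)) u4
      + h3K (K u1) (K u2) (K u3) x u4
      + hsw2K (K u1) (K u2) x (K u3) u4
      + hsw2K (K u2) (K u3) x (K u1) u4
      + hsw2K (K u3) (K u1) x (K u2) u4
      - h2K (K u4) x (K u2) (K u3) u1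
      + hKρl (hcyc (K u2) (K u4) x) (K u3) u1
      + hswK (K u2) (br (K u3) (K u4) x) u1
      - hKρl (hcyc (K u3) (K u4) x) (K u2) u1
      - h2K (K u4) x (K u3) (K u1) u2
      + hKρl (hcyc (K u3) (K u4) x) (K u1) u2
      + hswK (K u3) (br (K u1) (K u4) x) u2
      - hKρl (hcyc (K u1) (K u4) x) (K u3) u2
  have Gcomp : ∀ u1 u2 : V,
      F (Rv u1) (Rv u2) * R
        = R * F (Rv u1) (Rv u2)
          + R * (F (Rv u1) u2 + F u1 (Rv u2) + lam • F u1 u2) * R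
          + lam • (R * (F (Rv u1) u2 + F u1 (Rv u2) + lam • F u1 u2)) := by
    intro u1 u2; ext x
    simp only [Module.End.mul_apply, LinearMap.add_apply, LinearMap.smul_apply, h1, hKR,
      map_add, map_sub, map_smul]
    rw [hR (K u1) (K u2) x]
    simp only [descBr, map_add, map_smul, smul_add, smul_sub, smul_smul]
    have hcb := congrArg K (DFunLike.congr_fun (hcomp (K u2) x) u1)
    have hcx := congrArg K (DFunLike.congr_fun (hcomp x (K u1)) u2)
    simp only [Module.End.mul_apply, LinearMap.add_apply, LinearMap.smul_apply,
      map_add, map_smul, hKR] at hcb hcx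
    linear_combination (norm := module) - hcb - hcx
  exact ⟨F, h1, ⟨Gskew, Grid2, Grid3⟩, Gcomp⟩
end

section
/- Let 0 → (V,R_V) → (Â,R_Â) → (A,R) → 0 be a central extension of Rota-Baxter 3-Lie algebras of weight λ (so V is abelian, the maps i and p are morphisms of Rota-Baxter 3-Lie algebras with p∘i = 0, i injective, p surjective, ker p = i(V), and [V,V,Â] = [V,Â,V] = [Â,V,V] = 0). Let s : A → Â be any linear section of p (p∘s = id_A), and define ρ : A×A → gl(V) by ρ(x,y)v = [s(x), s(y), i(v)] (viewed in V via i). Then ρ is independent of the choice of section s, and (V, ρ, R_V) is a representation of the Rota-Baxter 3-Lie algebra (A,R); moreover equivalent central extensions give the same representation. -/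
section Helpers

variable {k : Type*} [Field k] {A V H : Type*}
  [AddCommGroup A] [Module k A] [AddCommGroup V] [Module k V]
  [AddCommGroup H] [Module k H]

lemma cycBr {brH : H →ₗ[k] H →ₗ[k] H →ₗ[k] H} (hH : IsThreeLieBracket brH)
    (a b c : H) : brH a b c = brH b c a := by
  rw [hH.1 a b c, hH.2.1 b a c, neg_neg]

lemma bracket_congr (brH : H →ₗ[k] H →ₗ[k] H →ₗ[k] H)
    (i1 : V →ₗ[k] H) (p1 : H →ₗ[k] A)
    (hexact1 : LinearMap.range i1 = LinearMap.ker p1)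
    (hcen1 : ∀ (u v : V) (a : H),
      brH (i1 u) (i1 v) a = 0 ∧ brH (i1 u) a (i1 v) = 0 ∧ brH a (i1 u) (i1 v) = 0)
    (a a' b b' : H) (v : V) (ha : p1 a = p1 a') (hb : p1 b = p1 b') :
    brH a b (i1 v) = brH a' b' (i1 v) := by
  obtain ⟨u, hu⟩ : a' - a ∈ LinearMap.range i1 := by
    rw [hexact1]; simp [LinearMap.mem_ker, map_sub, ha]
  obtain ⟨w, hw⟩ : b' - b ∈ LinearMap.range i1 := by
    rw [hexact1]; simp [LinearMap.mem_ker, map_sub, hb]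
  have ha' : a' = a + i1 u := by rw [hu]; abel
  have hb' : b' = b + i1 w := by rw [hw]; abel
  rw [ha', hb']
  simp [map_add, LinearMap.add_apply, (hcen1 u w (i1 v)).1, (hcen1 u v b).2.1,
    (hcen1 w v a).2.2]

lemma rep_of_section
    {brA : A →ₗ[k] A →ₗ[k] A →ₗ[k] A} {lam : k} {R : Module.End k A}
    {Rv : Module.End k V}
    {brH : H →ₗ[k] H →ₗ[k] H →ₗ[k] H} {RH : Module.End k H}
    (hH : IsThreeLieBracket brH) (hRH : IsRotaBaxter brH lam RH)
    {i1 : V →ₗ[k] H} {p1 : H →ₗ[k] A}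
    (hi1inj : Function.Injective i1)
    (hexact1 : LinearMap.range i1 = LinearMap.ker p1)
    (hi1R : ∀ v : V, i1 (Rv v) = RH (i1 v))
    (hp1br : ∀ a b c : H, p1 (brH a b c) = brA (p1 a) (p1 b) (p1 c))
    (hp1R : ∀ a : H, p1 (RH a) = R (p1 a))
    (hcen1 : ∀ (u v : V) (a : H),
      brH (i1 u) (i1 v) a = 0 ∧ brH (i1 u) a (i1 v) = 0 ∧ brH a (i1 u) (i1 v) = 0)
    {s : A →ₗ[k] H} (hs : ∀ x : A, p1 (s x) = x)
    {ρ : A →ₗ[k] A →ₗ[k] Module.End k V}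
    (hρ : ∀ (x y : A) (v : V), i1 (ρ x y v) = brH (s x) (s y) (i1 v)) :
    IsRBRep brA lam R ρ Rv := by
  have key := bracket_congr brH i1 p1 hexact1 hcen1
  have hskew : ∀ x y : A, ρ x y = - ρ y x := by
    intro x y; ext v; apply hi1inj
    simp only [LinearMap.neg_apply, map_neg, hρ]
    rw [hH.1 (s x) (s y) (i1 v)]
  have hbr : ∀ x1 x2 x3 : A,
      p1 (brH (s x1) (s x2) (s x3)) = p1 (s (brA x1 x2 x3)) := by
    intro x1 x2 x3; rw [hp1br]; simp [hs]
  refine ⟨⟨hskew, ?_, ?_⟩, ?_⟩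
  · intro x1 x2 x3 x4; ext v; apply hi1inj
    have t1 := key (brH (s x1) (s x2) (s x3)) (s (brA x1 x2 x3)) (s x4) (s x4) v
      (hbr x1 x2 x3) rfl
    have t2 := key (s x3) (s x3) (brH (s x1) (s x2) (s x4)) (s (brA x1 x2 x4)) v
      rfl (hbr x1 x2 x4)
    have t3 : brH (s x3) (s (brA x1 x2 x4)) (i1 v)
        = - brH (s (brA x1 x2 x4)) (s x3) (i1 v) := hH.1 _ _ _
    simp only [LinearMap.sub_apply, Module.End.mul_apply, map_sub, hρ]
    rw [hH.2.2 (s x1) (s x2) (s x3) (s x4) (i1 v), t1, t2, t3]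
    abel
  · intro x1 x2 x3 x4; ext v; apply hi1inj
    have t1 := key (brH (s x1) (s x2) (s x3)) (s (brA x1 x2 x3)) (s x4) (s x4) v
      (hbr x1 x2 x3) rfl
    simp only [LinearMap.add_apply, Module.End.mul_apply, map_add, hρ]
    rw [← t1, cycBr hH (brH (s x1) (s x2) (s x3)) (s x4) (i1 v),
      hH.2.2 (s x4) (i1 v) (s x1) (s x2) (s x3),
      ← cycBr hH (s x1) (s x4) (i1 v), ← cycBr hH (s x2) (s x4) (i1 v),
      ← cycBr hH (s x3) (s x4) (i1 v)]
    rw [← hρ x1 x4 v, ← hρ x2 x4 v, ← hρ x3 x4 v]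
    rw [cycBr hH (i1 (ρ x1 x4 v)) (s x2) (s x3),
      cycBr hH (s x1) (i1 (ρ x2 x4 v)) (s x3),
      cycBr hH (i1 (ρ x2 x4 v)) (s x3) (s x1)]
    rw [← hρ x2 x3 (ρ x1 x4 v), ← hρ x3 x1 (ρ x2 x4 v), ← hρ x1 x2 (ρ x3 x4 v)]
    abel
  · intro x1 x2; ext v; apply hi1inj
    have hR1 : p1 (s (R x1)) = p1 (RH (s x1)) := by rw [hs, hp1R, hs]
    have hR2 : p1 (s (R x2)) = p1 (RH (s x2)) := by rw [hs, hp1R, hs]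
    have e1 : brH (RH (s x1)) (RH (s x2)) (i1 v) = i1 (ρ (R x1) (R x2) v) := by
      rw [hρ]; exact (key _ _ _ _ v hR1 hR2).symm
    have e2 : brH (RH (s x1)) (s x2) (RH (i1 v)) = i1 (ρ (R x1) x2 (Rv v)) := by
      rw [hρ, ← hi1R]; exact (key _ _ _ _ (Rv v) hR1 rfl).symm
    have e3 : brH (s x1) (RH (s x2)) (RH (i1 v)) = i1 (ρ x1 (R x2) (Rv v)) := by
      rw [hρ, ← hi1R]; exact (key _ _ _ _ (Rv v) rfl hR2).symm
    have e4 : brH (RH (s x1)) (s x2) (i1 v) = i1 (ρ (R x1) x2 v) := by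
      rw [hρ]; exact (key _ _ _ _ v hR1 rfl).symm
    have e5 : brH (s x1) (RH (s x2)) (i1 v) = i1 (ρ x1 (R x2) v) := by
      rw [hρ]; exact (key _ _ _ _ v rfl hR2).symm
    have e6 : brH (s x1) (s x2) (RH (i1 v)) = i1 (ρ x1 x2 (Rv v)) := by
      rw [hρ, ← hi1R]
    have e7 : brH (s x1) (s x2) (i1 v) = i1 (ρ x1 x2 v) := (hρ _ _ _).symm
    have lhs1 : i1 ((ρ (R x1) (R x2) * Rv) v)
        = brH (RH (s x1)) (RH (s x2)) (RH (i1 v)) := by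
      rw [Module.End.mul_apply, hρ, ← hi1R]
      exact key _ _ _ _ (Rv v) hR1 hR2
    rw [lhs1, hRH]
    have hW : descBr brH lam RH (s x1) (s x2) (i1 v)
        = i1 (ρ (R x1) (R x2) v + ρ (R x1) x2 (Rv v) + ρ x1 (R x2) (Rv v)
            + lam • (ρ (R x1) x2 v + ρ x1 (R x2) v + ρ x1 x2 (Rv v))
            + lam ^ 2 • ρ x1 x2 v) := by
      rw [descBr, e1, e2, e3, e4, e5, e6, e7]
      simp only [map_add, map_smul]
    rw [hW, ← hi1R]
    congr 1
    simp only [map_add, map_smul, LinearMap.add_apply, Module.End.mul_apply,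
      LinearMap.smul_apply]
    module

end Helpers
section Exist

variable {k : Type*} [Field k] {A V H : Type*}
  [AddCommGroup A] [Module k A] [AddCommGroup V] [Module k V]
  [AddCommGroup H] [Module k H]

lemma exists_rho
    {brA : A →ₗ[k] A →ₗ[k] A →ₗ[k] A}
    (brH : H →ₗ[k] H →ₗ[k] H →ₗ[k] H)
    (i1 : V →ₗ[k] H) (p1 : H →ₗ[k] A)
    (hi1inj : Function.Injective i1)
    (hexact1 : LinearMap.range i1 = LinearMap.ker p1)
    (hp1br : ∀ a b c : H, p1 (brH a b c) = brA (p1 a) (p1 b) (p1 c))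
    (s : A →ₗ[k] H) :
    ∃ ρ : A →ₗ[k] A →ₗ[k] Module.End k V,
      ∀ (x y : A) (v : V), i1 (ρ x y v) = brH (s x) (s y) (i1 v) := by
  have hpi : ∀ v : V, p1 (i1 v) = 0 := by
    intro v
    have : i1 v ∈ LinearMap.ker p1 := hexact1 ▸ LinearMap.mem_range_self i1 v
    exact this
  have hmem : ∀ (x y : A) (v : V), ∃ w : V, i1 w = brH (s x) (s y) (i1 v) := by
    intro x y v
    have h : brH (s x) (s y) (i1 v) ∈ LinearMap.ker p1 := by
      simp [LinearMap.mem_ker, hp1br, hpi]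
    rw [← hexact1] at h
    exact h
  choose g hg using hmem
  have gadd : ∀ (x y : A) (v w : V), g x y (v + w) = g x y v + g x y w := by
    intro x y v w; apply hi1inj; simp [hg, map_add]
  have gsmul : ∀ (x y : A) (c : k) (v : V), g x y (c • v) = c • g x y v := by
    intro x y c v; apply hi1inj; simp [hg, map_smul]
  refine ⟨LinearMap.mk₂ k
    (fun x y => ⟨⟨g x y, gadd x y⟩, gsmul x y⟩) ?_ ?_ ?_ ?_, ?_⟩
  · intro x x' y; ext v; apply hi1inj
    simp [hg, map_add, LinearMap.add_apply]
  · intro c x y; ext v; apply hi1inj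
    simp [hg, map_smul, LinearMap.smul_apply]
  · intro x y y'; ext v; apply hi1inj
    simp [hg, map_add, LinearMap.add_apply]
  · intro c x y; ext v; apply hi1inj
    simp [hg, map_smul, LinearMap.smul_apply]
  · intro x y v
    simpa using hg x y v

end Exist

/-- for a central extension
`0 → (V, Rv) → (H, RH) → (A, R) → 0` of Rota-Baxter 3-Lie algebras of weight `lam`,
any section `s` of `p` induces a map `ρ` with `i (ρ x y v) = [s x, s y, i v]`; this `ρ`
exists, is a representation of `(A, R)` on `(V, Rv)`, is independent of the choice of
section, and equivalent central extensions induce the same representation. -/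
theorem central_extension_induced_representation
    {k : Type*} [Field k] {A V H H2 : Type*}
    [AddCommGroup A] [Module k A] [AddCommGroup V] [Module k V]
    [AddCommGroup H] [Module k H] [AddCommGroup H2] [Module k H2]
    (brA : A →ₗ[k] A →ₗ[k] A →ₗ[k] A) (lam : k) (R : Module.End k A)
    (hA : IsThreeLieBracket brA) (hR : IsRotaBaxter brA lam R)
    (Rv : Module.End k V)
    -- the first central extension
    (brH : H →ₗ[k] H →ₗ[k] H →ₗ[k] H) (RH : Module.End k H)
    (hH : IsThreeLieBracket brH) (hRH : IsRotaBaxter brH lam RH)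
    (i1 : V →ₗ[k] H) (p1 : H →ₗ[k] A)
    (hi1inj : Function.Injective i1) (hp1surj : Function.Surjective p1)
    (hexact1 : LinearMap.range i1 = LinearMap.ker p1)
    (hi1R : ∀ v : V, i1 (Rv v) = RH (i1 v))
    (hp1br : ∀ a b c : H, p1 (brH a b c) = brA (p1 a) (p1 b) (p1 c))
    (hp1R : ∀ a : H, p1 (RH a) = R (p1 a))
    (hcen1 : ∀ (u v : V) (a : H),
      brH (i1 u) (i1 v) a = 0 ∧ brH (i1 u) a (i1 v) = 0 ∧ brH a (i1 u) (i1 v) = 0)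
    -- a second, equivalent, central extension
    (brH2 : H2 →ₗ[k] H2 →ₗ[k] H2 →ₗ[k] H2) (RH2 : Module.End k H2)
    (hH2 : IsThreeLieBracket brH2) (hRH2 : IsRotaBaxter brH2 lam RH2)
    (i2 : V →ₗ[k] H2) (p2 : H2 →ₗ[k] A)
    (hi2inj : Function.Injective i2) (hp2surj : Function.Surjective p2)
    (hexact2 : LinearMap.range i2 = LinearMap.ker p2)
    (hi2R : ∀ v : V, i2 (Rv v) = RH2 (i2 v))
    (hp2br : ∀ a b c : H2, p2 (brH2 a b c) = brA (p2 a) (p2 b) (p2 c))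
    (hp2R : ∀ a : H2, p2 (RH2 a) = R (p2 a))
    (hcen2 : ∀ (u v : V) (a : H2),
      brH2 (i2 u) (i2 v) a = 0 ∧ brH2 (i2 u) a (i2 v) = 0 ∧ brH2 a (i2 u) (i2 v) = 0)
    -- the equivalence of the two extensions
    (φ : H →ₗ[k] H2)
    (hφbr : ∀ a b c : H, φ (brH a b c) = brH2 (φ a) (φ b) (φ c))
    (hφR : ∀ a : H, φ (RH a) = RH2 (φ a))
    (hφi : ∀ v : V, φ (i1 v) = i2 v)
    (hφp : ∀ a : H, p2 (φ a) = p1 a)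
    -- sections of the two extensions and the maps they induce
    (s1 : A →ₗ[k] H) (hs1 : ∀ x : A, p1 (s1 x) = x)
    (s2 : A →ₗ[k] H2) (hs2 : ∀ x : A, p2 (s2 x) = x)
    (ρ1 : A →ₗ[k] A →ₗ[k] Module.End k V)
    (hρ1 : ∀ (x y : A) (v : V), i1 (ρ1 x y v) = brH (s1 x) (s1 y) (i1 v))
    (ρ2 : A →ₗ[k] A →ₗ[k] Module.End k V)
    (hρ2 : ∀ (x y : A) (v : V), i2 (ρ2 x y v) = brH2 (s2 x) (s2 y) (i2 v)) :
    -- existence for any section, and the representation property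
    (∀ s : A →ₗ[k] H, (∀ x : A, p1 (s x) = x) →
      ∃ ρ : A →ₗ[k] A →ₗ[k] Module.End k V,
        (∀ (x y : A) (v : V), i1 (ρ x y v) = brH (s x) (s y) (i1 v)) ∧
        IsRBRep brA lam R ρ Rv)
    ∧ IsRBRep brA lam R ρ1 Rv
    -- independence of the choice of section
    ∧ (∀ (s s' : A →ₗ[k] H) (ρ ρ' : A →ₗ[k] A →ₗ[k] Module.End k V),
        (∀ x : A, p1 (s x) = x) → (∀ x : A, p1 (s' x) = x) →
        (∀ (x y : A) (v : V), i1 (ρ x y v) = brH (s x) (s y) (i1 v)) →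
        (∀ (x y : A) (v : V), i1 (ρ' x y v) = brH (s' x) (s' y) (i1 v)) →
        ρ = ρ')
    -- equivalent extensions give the same representation
    ∧ ρ1 = ρ2 := by
  have key1 := bracket_congr brH i1 p1 hexact1 hcen1
  have key2 := bracket_congr brH2 i2 p2 hexact2 hcen2
  refine ⟨?_, ?_, ?_, ?_⟩
  · intro s hs
    obtain ⟨ρ, hρ⟩ := exists_rho (brA := brA) brH i1 p1 hi1inj hexact1 hp1br s
    exact ⟨ρ, hρ, rep_of_section hH hRH hi1inj hexact1 hi1R hp1br hp1R hcen1 hs hρ⟩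
  · exact rep_of_section hH hRH hi1inj hexact1 hi1R hp1br hp1R hcen1 hs1 hρ1
  · intro s s' ρ ρ' hs hs' hρ hρ'
    ext x y v; apply hi1inj
    rw [hρ, hρ']
    exact key1 _ _ _ _ v (by rw [hs, hs']) (by rw [hs, hs'])
  · ext x y v; apply hi2inj
    rw [hρ2]
    have h1 : i2 (ρ1 x y v) = φ (i1 (ρ1 x y v)) := (hφi _).symm
    rw [h1, hρ1, hφbr, hφi]
    exact key2 _ _ _ _ v (by rw [hφp, hs1, hs2]) (by rw [hφp, hs1, hs2])
end

section
/- Let (A,R) be a Rota-Baxter 3-Lie algebra of weight λ, V a vector space with a linear map R_V : V → V (regarded as a trivial representation, ρ = 0), ψ : A×A×A → V a trilinear totally skew-symmetric map, and χ : A → V a linear map. Define on A ⊕ V the bracket [x+a, y+b, z+c]_ψ = [x,y,z] + ψ(x,y,z) and the linear map R_χ(x+a) = R(x) + R_V(a) + χ(x). Then (A ⊕ V, [·,·,·]_ψ, R_χ) is a Rota-Baxter 3-Lie algebra of weight λ if and only if (ψ,χ) is a 2-cocycle with trivial coefficients, i.e.: (1) ψ([x1,x2,y1],y2,y3) + ψ(y1,[x1,x2,y2],y3)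 + ψ(y1,y2,[x1,x2,y3]) − ψ(x1,x2,[y1,y2,y3]) = 0 for all xi,yi ∈ A; and (2) χ([x,y,z]_R) = ψ(R(x),R(y),R(z)) − R_V( ψ(R(x),R(y),z) + ψ(R(x),y,R(z)) + ψ(x,R(y),R(z)) + λ(ψ(R(x),y,z) + ψ(x,R(y),z) + ψ(x,y,R(z))) + λ²ψ(x,y,z) ) for all x,y,z ∈ A, where [x,y,z]_R is the descendent bracket of (A,R). -/
/-- `(A ⊕ V, [·,·,·]_ψ, R_χ)` is a Rota-Baxter 3-Lie algebra of weight
`lam` if and only if `(ψ, χ)` is a 2-cocycle of `(A, R)` with coefficients in the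
trivial representation `(V, Rv)`. -/
theorem extension_RotaBaxter_iff_two_cocycle
    {k : Type*} [Field k] {A V : Type*} [AddCommGroup A] [Module k A]
    [AddCommGroup V] [Module k V]
    (br : A →ₗ[k] A →ₗ[k] A →ₗ[k] A) (lam : k) (R : Module.End k A)
    (hbr : IsThreeLieBracket br) (hR : IsRotaBaxter br lam R)
    (Rv : Module.End k V)
    (ψ : A →ₗ[k] A →ₗ[k] A →ₗ[k] V)
    (hψ1 : ∀ x y z : A, ψ x y z = - ψ y x z)
    (hψ2 : ∀ x y z : A, ψ x y z = - ψ x z y)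
    (χ : A →ₗ[k] V)
    (brE : (A × V) →ₗ[k] (A × V) →ₗ[k] (A × V) →ₗ[k] (A × V))
    (hbrE : ∀ p q r : A × V, brE p q r = (br p.1 q.1 r.1, ψ p.1 q.1 r.1))
    (Rχ : Module.End k (A × V))
    (hRχ : ∀ p : A × V, Rχ p = (R p.1, Rv p.2 + χ p.1)) :
    (IsThreeLieBracket brE ∧ IsRotaBaxter brE lam Rχ) ↔
      ((∀ x1 x2 y1 y2 y3 : A,
          ψ (br x1 x2 y1) y2 y3 + ψ y1 (br x1 x2 y2) y3 + ψ y1 y2 (br x1 x2 y3)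
            - ψ x1 x2 (br y1 y2 y3) = 0) ∧
       (∀ x y z : A,
          χ (descBr br lam R x y z)
            = ψ (R x) (R y) (R z)
              - Rv (ψ (R x) (R y) z + ψ (R x) y (R z) + ψ x (R y) (R z)
                  + lam • (ψ (R x) y z + ψ x (R y) z + ψ x y (R z))
                  + lam ^ 2 • ψ x y z))) := by
  constructor
  · rintro ⟨hE, hRB⟩
    constructor
    · intro x1 x2 y1 y2 y3
      have h := hE.2.2 (x1, (0:V)) (x2, 0) (y1, 0) (y2, 0) (y3, 0)
      simp only [hbrE, Prod.mk_add_mk, Prod.mk.injEq] at h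
      rw [h.2]
      abel
    · intro x y z
      have h := hRB (x, (0:V)) (y, 0) (z, 0)
      simp only [descBr, hbrE, hRχ, Prod.mk_add_mk, Prod.smul_mk, map_zero, zero_add,
        Prod.mk.injEq] at h
      simp only [descBr]
      rw [h.2]
      abel
  · rintro ⟨hc1, hc2⟩
    refine ⟨⟨?_, ?_, ?_⟩, ?_⟩
    · intro p q r
      rw [hbrE, hbrE, Prod.neg_mk, ← hbr.1, ← hψ1]
    · intro p q r
      rw [hbrE, hbrE, Prod.neg_mk, ← hbr.2.1, ← hψ2]
    · intro p1 p2 q1 q2 q3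
      simp only [hbrE, Prod.mk_add_mk, Prod.mk.injEq]
      refine ⟨hbr.2.2 _ _ _ _ _, ?_⟩
      have h := hc1 p1.1 p2.1 q1.1 q2.1 q3.1
      rw [sub_eq_zero] at h
      exact h.symm
    · intro p q r
      simp only [descBr, hbrE, hRχ, Prod.mk_add_mk, Prod.smul_mk, Prod.mk.injEq]
      have h1 := hR p.1 q.1 r.1
      simp only [descBr] at h1
      have h2 := hc2 p.1 q.1 r.1
      simp only [descBr] at h2
      refine ⟨h1, ?_⟩
      rw [h2]
      abel
end
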